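/- arXiv:1401.2093 — 8 statements merged into one kernel-verified Lean document; each statement's English description precedes it below -/
import Mathlib

section
/- Unit property of the composition of orientations. For a finite-dimensional real vector space A, define the identity orientation datum (A, A, 0, μ^id_A) where μ^id_A := (−1)^{a(a+1)/2} β ∧ α, a = dim A, and β and α are the orientations of the two copies of A determined by a common orientation of A (the result is independent of that choice). (Left unit) Let (A₂, B₂, C₂, μ₂) be orientation data, π : A₂ → B₂ a linear map, and f : A₂ → A₂ ⊕ B₂ given by f(x) = (x, −π(x)). Then ker(f) = 0, the map A₂ ⊕ B₂ → B₂, (a, b) ↦ b + π(a), induces an isomorphism coker(f) ≅ B₂, and under these identifications μ₂ ∘_f μ^id_{A₂} = μ₂ as orientations of B₂ ⊕ A₂ ⊕ C₂. (Right unit) Let (A₁, B₁, C₁, μ₁) be orientation data, A' a finite-dimensional real vector space, π : A' → B₁ a linear map, and f : A' → B₁ ⊕ A' given by f(x) = (π(x), −x). Then ker(f) = 0, the map B₁ ⊕ A' → B₁, (b, a) ↦ b + π(a), induces an isomorphism coker(f) ≅ B₁, and under these identifications μ^id_{A'} ∘_f μ₁ = μ₁ as orientations of B₁ ⊕ A₁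 ⊕ C₁. -/
open Module

noncomputable section

/-- The concatenation of a basis of `V` and a basis of `W`, as a basis of `V × W`.
On orientations this realizes the wedge `ω ∧ ω'` of orientations. -/
def prodBasis {V W : Type*} [AddCommGroup V] [Module ℝ V]
    [AddCommGroup W] [Module ℝ W] {m n : ℕ}
    (bv : Basis (Fin m) ℝ V) (bw : Basis (Fin n) ℝ W) :
    Basis (Fin (m + n)) ℝ (V × W) :=
  (bv.prod bw).reindex finSumFinEquiv

/-- Given orientation data `(Aᵢ, Bᵢ, Cᵢ, μᵢ)` for `i = 1, 2` and a linear map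
`f : A₂ → B₁ ⊕ B₂`, the proposition that the orientation `ν` of
`coker f ⊕ A₁ ⊕ (C₁ ⊕ C₂ ⊕ ker f)` is obtained from some system of choices as in the
definition of the composite orientation `μ₂ ∘_f μ₁`. -/
def IsCompositeOrientation
    {A₁ B₁ C₁ A₂ B₂ C₂ : Type*}
    [AddCommGroup A₁] [Module ℝ A₁] [AddCommGroup B₁] [Module ℝ B₁]
    [AddCommGroup C₁] [Module ℝ C₁] [AddCommGroup A₂] [Module ℝ A₂]
    [AddCommGroup B₂] [Module ℝ B₂] [AddCommGroup C₂] [Module ℝ C₂]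
    {na₁ nb₁ nc₁ na₂ nb₂ nc₂ nk ncok : ℕ}
    (f : A₂ →ₗ[ℝ] B₁ × B₂)
    (μ₁ : Orientation ℝ (B₁ × (A₁ × C₁)) (Fin (nb₁ + (na₁ + nc₁))))
    (μ₂ : Orientation ℝ (B₂ × (A₂ × C₂)) (Fin (nb₂ + (na₂ + nc₂))))
    (ν : Orientation ℝ
      (((B₁ × B₂) ⧸ LinearMap.range f) × (A₁ × (C₁ × (C₂ × ↥(LinearMap.ker f)))))
      (Fin (ncok + (na₁ + (nc₁ + (nc₂ + nk)))))) : Prop :=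
  ∃ (a₁ : Basis (Fin na₁) ℝ A₁) (b₁ : Basis (Fin nb₁) ℝ B₁)
    (c₁ : Basis (Fin nc₁) ℝ C₁) (a₂ : Basis (Fin na₂) ℝ A₂)
    (b₂ : Basis (Fin nb₂) ℝ B₂) (c₂ : Basis (Fin nc₂) ℝ C₂)
    (dl : Basis (Fin (finrank ℝ ↥(LinearMap.range f))) ℝ ↥(LinearMap.range f))
    (e : Basis (Fin ncok) ℝ ((B₁ × B₂) ⧸ LinearMap.range f))
    (z : Basis (Fin nk) ℝ ↥(LinearMap.ker f))
    (F : (↥(LinearMap.range f) × ((B₁ × B₂) ⧸ LinearMap.range f)) ≃ₗ[ℝ] B₁ × B₂)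
    (G : (↥(LinearMap.ker f) × ↥(LinearMap.range f)) ≃ₗ[ℝ] A₂)
    (hFi : finrank ℝ ↥(LinearMap.range f) + ncok = nb₁ + nb₂)
    (hGi : nk + finrank ℝ ↥(LinearMap.range f) = na₂),
    (∀ x : ↥(LinearMap.range f), F (x, 0) = (x : B₁ × B₂)) ∧
    (∀ y : (B₁ × B₂) ⧸ LinearMap.range f,
      Submodule.mkQ (LinearMap.range f) (F (0, y)) = y) ∧
    (∀ x : ↥(LinearMap.ker f), G (x, 0) = (x : A₂)) ∧
    (∀ y : ↥(LinearMap.range f), f (G (0, y)) = (y : B₁ × B₂)) ∧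
    μ₁ = (prodBasis b₁ (prodBasis a₁ c₁)).orientation ∧
    μ₂ = (prodBasis b₂ (prodBasis a₂ c₂)).orientation ∧
    Orientation.reindex ℝ _ (finCongr hFi) ((prodBasis dl e).map F).orientation =
      (prodBasis b₁ b₂).orientation ∧
    Orientation.reindex ℝ _ (finCongr hGi) ((prodBasis z dl).map G).orientation =
      a₂.orientation ∧
    ν = (if (nb₁ * na₂ + nb₁ * nc₂ + na₂ * nc₂ +
            finrank ℝ ↥(LinearMap.range f) * (finrank ℝ ↥(LinearMap.range f) - 1) / 2) % 2 = 0
      then (prodBasis e (prodBasis a₁ (prodBasis c₁ (prodBasis c₂ z)))).orientation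
      else -(prodBasis e (prodBasis a₁ (prodBasis c₁ (prodBasis c₂ z)))).orientation)

/-- The identity orientation datum on `A` is `(A, A, 0, μ^id_A)`, where
`μ^id_A = (−1)^{a(a+1)/2} β ∧ α` with `β`, `α` the orientations of the two copies of `A`
determined by a common orientation (here realized by a common basis). -/
def IsIdOrientation {A : Type*} [AddCommGroup A] [Module ℝ A] {n nc : ℕ}
    (μ : Orientation ℝ (A × (A × PUnit)) (Fin (n + (n + nc)))) : Prop :=
  ∃ (b : Basis (Fin n) ℝ A) (c : Basis (Fin nc) ℝ PUnit),
    μ = (if (n * (n + 1) / 2) % 2 = 0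
      then (prodBasis b (prodBasis b c)).orientation
      else -(prodBasis b (prodBasis b c)).orientation)

/-!
Every orientation here is that of a basis, and two bases define the same orientation exactly when
the determinant of one against the other is positive, so both unit laws are sign bookkeeping.
Since `f` is injective, `G` identifies `im f` with `A`, and `g` identifies `coker f` with `B`.
The shear `(x, y) ↦ (x, y + π x)` (resp. `(x, y) ↦ (x + π' y, y)`) has determinant one and moves
`im f` into a single factor, so the condition on `F` becomes block triangular and relates the
orientations of `im f ≅ A` and `coker f ≅ B`. The sign `(-1)^s` of the composite must then match
`(-1)^(a(a+1)/2)` from the identity datum, times, for the right unit, `(-1)^a` from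
`f'(x) = (π' x, -x)` and `(-1)^(b₁ a)` from swapping the two blocks; this comes down to
`a(a+1)/2 = a(a-1)/2 + a` and `a² ≡ a (mod 2)`.
-/

section ProdBasis

variable {V W : Type*} [AddCommGroup V] [Module ℝ V] [AddCommGroup W] [Module ℝ W]
  {m n : ℕ} (bv : Basis (Fin m) ℝ V) (bw : Basis (Fin n) ℝ W)

@[simp]
theorem prodBasis_castAdd (i : Fin m) : prodBasis bv bw (Fin.castAdd n i) = (bv i, 0) := by
  simp [prodBasis]

@[simp]
theorem prodBasis_natAdd (j : Fin n) : prodBasis bv bw (Fin.natAdd m j) = (0, bw j) := by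
  simp [prodBasis]

theorem prodBasis_apply_of_lt (k : Fin (m + n)) (h : (k : ℕ) < m) :
    prodBasis bv bw k = (bv ⟨k, h⟩, 0) := by
  rw [← prodBasis_castAdd bv bw]; rfl

theorem prodBasis_apply_of_le (k : Fin (m + n)) (h : m ≤ (k : ℕ)) :
    prodBasis bv bw k = (0, bw ⟨k - m, by omega⟩) := by
  rw [← prodBasis_natAdd bv bw]; congr; ext; simp; omega

theorem prodBasis_det_of_snd_eq_zero (v : Fin (m + n) → V × W)
    (h : ∀ i, (v (Fin.castAdd n i)).2 = 0) :
    (prodBasis bv bw).det v =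
      bv.det (fun i => (v (Fin.castAdd n i)).1) * bw.det (fun j => (v (Fin.natAdd m j)).2) := by
  rw [prodBasis, Basis.det_reindex, Basis.det_apply, Basis.det_apply, Basis.det_apply,
    ← Matrix.det_fromBlocks_zero₂₁ _ (bv.toMatrix fun j => (v (Fin.natAdd m j)).1)]
  congr 1
  ext (i | i) (j | j) <;> simp [Basis.toMatrix_apply, h]

theorem prodBasis_det_of_fst_eq_zero (v : Fin (m + n) → V × W)
    (h : ∀ j, (v (Fin.natAdd m j)).1 = 0) :
    (prodBasis bv bw).det v =
      bv.det (fun i => (v (Fin.castAdd n i)).1) * bw.det (fun j => (v (Fin.natAdd m j)).2) := by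
  rw [prodBasis, Basis.det_reindex, Basis.det_apply, Basis.det_apply, Basis.det_apply,
    ← Matrix.det_fromBlocks_zero₁₂ _ (bw.toMatrix fun i => (v (Fin.castAdd n i)).2)]
  congr 1
  ext (i | i) (j | j) <;> simp [Basis.toMatrix_apply, h]

theorem prodBasis_det_prodBasis (bv' : Basis (Fin m) ℝ V) (bw' : Basis (Fin n) ℝ W) :
    (prodBasis bv bw).det (prodBasis bv' bw') = bv.det bv' * bw.det bw' := by
  rw [prodBasis_det_of_snd_eq_zero _ _ _ (by simp)]
  simp

/- The shear `(x, y) ↦ (x, y + π x)` has determinant one and makes `v` block triangular. -/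
theorem prodBasis_det_of_snd_add_eq_zero (π : V →ₗ[ℝ] W) (v : Fin (m + n) → V × W)
    (h : ∀ i, (v (Fin.castAdd n i)).2 + π (v (Fin.castAdd n i)).1 = 0) :
    (prodBasis bv bw).det v = bv.det (fun i => (v (Fin.castAdd n i)).1) *
      bw.det (fun j => (v (Fin.natAdd m j)).2 + π (v (Fin.natAdd m j)).1) := by
  let S := (LinearMap.fst ℝ V W).prod (LinearMap.snd ℝ V W + π ∘ₗ LinearMap.fst ℝ V W)
  have hS : LinearMap.det S = 1 := by
    rw [← mul_one (LinearMap.det S), ← (prodBasis bv bw).det_self, ← Basis.det_comp,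
      prodBasis_det_of_fst_eq_zero _ _ _ (by simp [S])]
    simp [S, Basis.det_self]
  rw [← one_mul ((prodBasis bv bw).det v), ← hS, ← Basis.det_comp,
    prodBasis_det_of_snd_eq_zero _ _ _ h]
  rfl

theorem prodBasis_det_of_fst_add_eq_zero (π : W →ₗ[ℝ] V) (v : Fin (m + n) → V × W)
    (h : ∀ j, (v (Fin.natAdd m j)).1 + π (v (Fin.natAdd m j)).2 = 0) :
    (prodBasis bv bw).det v =
      bv.det (fun i => (v (Fin.castAdd n i)).1 + π (v (Fin.castAdd n i)).2) *
        bw.det (fun j => (v (Fin.natAdd m j)).2) := by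
  let S := (LinearMap.fst ℝ V W + π ∘ₗ LinearMap.snd ℝ V W).prod (LinearMap.snd ℝ V W)
  have hS : LinearMap.det S = 1 := by
    rw [← mul_one (LinearMap.det S), ← (prodBasis bv bw).det_self, ← Basis.det_comp,
      prodBasis_det_of_snd_eq_zero _ _ _ (by simp [S])]
    simp [S, Basis.det_self]
  rw [← one_mul ((prodBasis bv bw).det v), ← hS, ← Basis.det_comp,
    prodBasis_det_of_fst_eq_zero _ _ _ h]
  rfl

end ProdBasis

theorem val_finRotate_pow_apply {N : ℕ} (j : ℕ) (i : Fin N) :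
    ((finRotate N ^ j) i : ℕ) = (i + j) % N := by
  induction j with
  | zero => simp [Nat.mod_eq_of_lt i.isLt]
  | succ j ih =>
    rw [pow_succ', Equiv.Perm.mul_apply, finRotate_apply, Fin.val_add, ih, Fin.val_one',
      ← Nat.add_mod, add_assoc]

theorem finAddFlip_trans_finCongr_eq_pow (m n : ℕ) :
    (finAddFlip.trans (finCongr (Nat.add_comm n m)) : Equiv.Perm (Fin (m + n))) =
      finRotate (m + n) ^ n := by
  ext k
  have := k.isLt
  rw [val_finRotate_pow_apply]
  rcases lt_or_ge (k : ℕ) m with hk | hk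
  · simp [finAddFlip_apply_mk_left hk, Nat.mod_eq_of_lt (show (k : ℕ) + n < m + n by omega)]
    omega
  · simp [finAddFlip_apply_mk_right hk k.isLt, Nat.mod_eq_sub_mod (show m + n ≤ k + n by omega),
      Nat.mod_eq_of_lt (show (k : ℕ) + n - (m + n) < m + n by omega)]
    omega

theorem sign_finAddFlip_trans_finCongr (m n : ℕ) :
    Equiv.Perm.sign (finAddFlip.trans (finCongr (Nat.add_comm n m)) : Equiv.Perm (Fin (m + n))) =
      (-1) ^ (m * n) := by
  rw [finAddFlip_trans_finCongr_eq_pow, map_pow, sign_finRotate, ← pow_mul,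
    Int.units_pow_eq_pow_mod_two, Int.units_pow_eq_pow_mod_two _ (m * n), Nat.mul_mod,
    Nat.mul_mod m]
  rcases Nat.mod_two_eq_zero_or_one n with h | h <;> simp [h]
  rw [show (m + n - 1) % 2 = m % 2 by omega]

theorem pos_mul_of_pos_mul_of_pos_mul {a b x : ℝ} (ha : 0 < a * x) (hb : 0 < b * x) :
    0 < a * b :=
  pos_of_mul_pos_left (b := x ^ 2) ((mul_pos ha hb).trans_eq (by ring)) (sq_nonneg x)

namespace Module.Basis

variable {M : Type*} [AddCommGroup M] [Module ℝ M]

theorem index_eq_zero_of_subsingleton [Subsingleton M] {n : ℕ} (b : Basis (Fin n) ℝ M) :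
    n = 0 := by
  simpa [finrank_zero_of_subsingleton] using (finrank_eq_card_basis b).symm

theorem det_empty (b : Basis (Fin 0) ℝ M) (v : Fin 0 → M) : b.det v = 1 := by
  simp [Basis.det_isEmpty]

theorem det_neg_apply {n : ℕ} (b : Basis (Fin n) ℝ M) (v : Fin n → M) :
    b.det (fun i => -v i) = (-1) ^ n * b.det v := by
  simpa using b.det.map_smul_univ (fun _ => (-1 : ℝ)) v

theorem det_comp_finCast_add_comm {m n : ℕ} (b : Basis (Fin (m + n)) ℝ M) (v : Fin (n + m) → M)
    (h : m + n = n + m) :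
    b.det (v ∘ Fin.cast h) = (-1) ^ (m * n) * b.det (v ∘ finAddFlip) := by
  have := b.det.map_perm (v ∘ Fin.cast h) (finAddFlip.trans (finCongr (Nat.add_comm n m)))
  have hv : (v ∘ Fin.cast h) ∘ (finAddFlip.trans (finCongr (Nat.add_comm n m))) =
      v ∘ finAddFlip := by
    ext k; simp
  rw [sign_finAddFlip_trans_finCongr, hv, Units.smul_def, zsmul_eq_mul] at this
  rw [this]
  push_cast
  rw [← mul_assoc, ← mul_pow]
  simp

variable {ι : Type*} [Fintype ι] [DecidableEq ι]

theorem det_mul_det_apply (b b' : Basis ι ℝ M) (v : ι → M) : b.det b' * b'.det v = b.det v := by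
  simpa using (congrArg (fun f => f v) (b.det.eq_smul_basis_det b')).symm

theorem mul_det_pos_trans {α β : ℝ} (p q : Basis ι ℝ M) (v : ι → M) (hq : 0 < α * p.det q)
    (hv : 0 < β * q.det v) : 0 < α * β * p.det v := by
  rw [← p.det_mul_det_apply q v]
  exact (mul_pos hq hv).trans_eq (by ring)

theorem mul_det_pos_of_mul_det_pos {α β : ℝ} (p q : Basis ι ℝ M) (v : ι → M)
    (hq : 0 < α * q.det v) (hp : 0 < β * p.det v) : 0 < α * β * p.det q := by
  rw [← p.det_mul_det_apply q v, ← mul_assoc] at hp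
  exact (pos_mul_of_pos_mul_of_pos_mul hq hp).trans_eq (by ring)

theorem ite_orientation_eq_iff (k : ℕ) (b c : Basis ι ℝ M) :
    (if k % 2 = 0 then b.orientation else -b.orientation) = c.orientation ↔
      0 < (-1 : ℝ) ^ k * c.det b := by
  rcases Nat.mod_two_eq_zero_or_one k with h | h
  · rw [if_pos h, eq_comm, orientation_eq_iff_det_pos, (Nat.even_iff.2 h).neg_one_pow, one_mul]
  · rw [if_neg (by omega), eq_comm, ← orientation_ne_iff_eq_neg, Ne, orientation_eq_iff_det_pos,
      (Nat.odd_iff.2 h).neg_one_pow, neg_one_mul, neg_pos, not_lt,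
      le_iff_lt_or_eq, or_iff_left (c.isUnit_det b).ne_zero]

end Module.Basis

theorem Orientation.reindex_finCongr_eq_iff {M : Type*} [AddCommGroup M] [Module ℝ M] {m n : ℕ}
    (h : m = n) (b : Basis (Fin m) ℝ M) (c : Basis (Fin n) ℝ M) :
    Orientation.reindex ℝ M (finCongr h) b.orientation = c.orientation ↔
      0 < c.det (b ∘ Fin.cast h.symm) := by
  rw [← Basis.orientation_reindex, eq_comm, Basis.orientation_eq_iff_det_pos, Basis.coe_reindex]
  rfl

theorem Orientation.reindex_map_ite {M N ι ι' : Type*} [AddCommGroup M] [Module ℝ M]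
    [AddCommGroup N] [Module ℝ N] [Fintype ι] [DecidableEq ι] [Fintype ι'] [DecidableEq ι']
    (T : M ≃ₗ[ℝ] N) (σ : ι ≃ ι') (p : Prop) [Decidable p] (b : Basis ι ℝ M) :
    Orientation.reindex ℝ N σ (Orientation.map ι T (if p then b.orientation else -b.orientation))
      = if p then ((b.map T).reindex σ).orientation else -((b.map T).reindex σ).orientation := by
  split_ifs <;> simp [Basis.orientation_map, Basis.orientation_reindex]

section IdOrientation

variable {A : Type*} [AddCommGroup A] [Module ℝ A] {n nc : ℕ}

theorem IsIdOrientation.eq {μ μ' : Orientation ℝ (A × (A × PUnit)) (Fin (n + (n + nc)))}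
    (hμ : IsIdOrientation μ) (hμ' : IsIdOrientation μ') : μ = μ' := by
  obtain ⟨b, c, rfl⟩ := hμ
  obtain ⟨b', c', rfl⟩ := hμ'
  obtain rfl : nc = 0 := c.index_eq_zero_of_subsingleton
  have : (prodBasis b (prodBasis b c)).orientation =
      (prodBasis b' (prodBasis b' c')).orientation := by
    rw [Basis.orientation_eq_iff_det_pos, prodBasis_det_prodBasis, prodBasis_det_prodBasis,
      c.det_empty, mul_one]
    exact mul_self_pos.2 (b.isUnit_det b').ne_zero
  rw [this]

theorem IsIdOrientation.det_pos {μ : Orientation ℝ (A × (A × PUnit)) (Fin (n + (n + nc)))}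
    (hμ : IsIdOrientation μ) (b a : Basis (Fin n) ℝ A) (c : Basis (Fin nc) ℝ PUnit)
    (h : μ = (prodBasis b (prodBasis a c)).orientation) :
    0 < (-1 : ℝ) ^ (n * (n + 1) / 2) * b.det a := by
  obtain ⟨r, c', hr⟩ := hμ
  obtain rfl : nc = 0 := c.index_eq_zero_of_subsingleton
  rw [h, eq_comm, Basis.ite_orientation_eq_iff, prodBasis_det_prodBasis, prodBasis_det_prodBasis,
    c.det_empty, mul_one, ← mul_assoc, ← b.det_mul_det_apply a r] at hr
  exact pos_of_mul_pos_left (b := a.det r ^ 2) (hr.trans_eq (by ring)) (sq_nonneg _)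

end IdOrientation

section Graph

variable {V W : Type*} [AddCommGroup V] [Module ℝ V] [AddCommGroup W] [Module ℝ W]

theorem ker_eq_bot_of_eq_neg_graph_left {π : V →ₗ[ℝ] W} {f : V →ₗ[ℝ] V × W}
    (hf : ∀ x, f x = (x, -π x)) : LinearMap.ker f = ⊥ :=
  LinearMap.ker_eq_bot_of_injective fun x y hxy => by simpa [hf] using congrArg Prod.fst hxy

theorem ker_eq_bot_of_eq_neg_graph_right {π : W →ₗ[ℝ] V} {f : W →ₗ[ℝ] V × W}
    (hf : ∀ x, f x = (π x, -x)) : LinearMap.ker f = ⊥ :=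
  LinearMap.ker_eq_bot_of_injective fun x y hxy => by simpa [hf] using congrArg Prod.snd hxy

theorem ker_eq_range_of_eq_neg_graph_left {π : V →ₗ[ℝ] W} {f : V →ₗ[ℝ] V × W}
    {g : V × W →ₗ[ℝ] W} (hf : ∀ x, f x = (x, -π x)) (hg : ∀ p, g p = p.2 + π p.1) :
    LinearMap.ker g = LinearMap.range f := by
  ext ⟨x, y⟩
  simp only [LinearMap.mem_ker, LinearMap.mem_range, hg, hf, Prod.mk.injEq, exists_eq_left]
  rw [neg_eq_iff_add_eq_zero, add_comm]

theorem ker_eq_range_of_eq_neg_graph_right {π : W →ₗ[ℝ] V} {f : W →ₗ[ℝ] V × W}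
    {g : V × W →ₗ[ℝ] V} (hf : ∀ x, f x = (π x, -x)) (hg : ∀ p, g p = p.1 + π p.2) :
    LinearMap.ker g = LinearMap.range f := by
  ext ⟨x, y⟩
  simp only [LinearMap.mem_ker, LinearMap.mem_range, hg, hf, Prod.mk.injEq, neg_eq_iff_eq_neg,
    exists_eq_right, map_neg]
  rw [eq_neg_iff_add_eq_zero, add_comm]

theorem surjective_of_eq_snd_add {π : V →ₗ[ℝ] W} {g : V × W →ₗ[ℝ] W}
    (hg : ∀ p, g p = p.2 + π p.1) : Function.Surjective g :=
  fun y => ⟨(0, y), by simp [hg]⟩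

theorem surjective_of_eq_fst_add {π : W →ₗ[ℝ] V} {g : V × W →ₗ[ℝ] V}
    (hg : ∀ p, g p = p.1 + π p.2) : Function.Surjective g :=
  fun x => ⟨(x, 0), by simp [hg]⟩

end Graph

def LinearMap.quotEquivOfKerEq {M N : Type*} [AddCommGroup M] [Module ℝ M] [AddCommGroup N]
    [Module ℝ N] (g : M →ₗ[ℝ] N) (hg : Function.Surjective g) (p : Submodule ℝ M)
    (h : LinearMap.ker g = p) : (M ⧸ p) ≃ₗ[ℝ] N :=
  (Submodule.quotEquivOfEq _ _ h.symm).trans (g.quotKerEquivOfSurjective hg)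

@[simp]
theorem LinearMap.quotEquivOfKerEq_mk {M N : Type*} [AddCommGroup M] [Module ℝ M]
    [AddCommGroup N] [Module ℝ N] (g : M →ₗ[ℝ] N) (hg : Function.Surjective g)
    (p : Submodule ℝ M) (h : LinearMap.ker g = p) (x : M) :
    g.quotEquivOfKerEq hg p h (Submodule.Quotient.mk x) = g x := by
  simp [LinearMap.quotEquivOfKerEq, Submodule.quotEquivOfEq_mk]

theorem map_prodBasis_reindex_eq {Q A R B C : Type*} [AddCommGroup Q] [Module ℝ Q]
    [AddCommGroup A] [Module ℝ A] [AddCommGroup R] [Module ℝ R] [AddCommGroup B] [Module ℝ B]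
    [AddCommGroup C] [Module ℝ C] {nq na nr nc : ℕ}
    (T : (Q × (A × R)) ≃ₗ[ℝ] B × (A × C)) (φ : Q ≃ₗ[ℝ] B) (ψ : R →ₗ[ℝ] C)
    (hT : ∀ q a r, T (q, (a, r)) = (φ q, (a, ψ r)))
    (e : Basis (Fin nq) ℝ Q) (a : Basis (Fin na) ℝ A) (r : Basis (Fin nr) ℝ R)
    (c : Basis (Fin nc) ℝ C) (hrc : nr = nc) (hψ : ∀ k, ψ (r k) = c (Fin.cast hrc k))
    (h : nq + (na + nr) = nq + (na + nc)) :
    ((prodBasis e (prodBasis a r)).map T).reindex (finCongr h) =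
      prodBasis (e.map φ) (prodBasis a c) := by
  subst hrc
  ext k : 1
  simp only [finCongr_refl, Basis.reindex_refl, Basis.map_apply]
  refine Fin.addCases (fun i => ?_) (fun j => Fin.addCases (fun i => ?_) (fun k => ?_) j) k
  · simpa [Prod.mk_zero_zero] using hT (e i) 0 0
  · simpa using hT 0 (a i) 0
  · simpa [hψ] using hT 0 0 (r k)

theorem det_pos_of_reindex_map_prodBasis_of_isEmpty {K R A : Type*} [AddCommGroup K]
    [Module ℝ K] [AddCommGroup R] [Module ℝ R] [AddCommGroup A] [Module ℝ A] {d : ℕ}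
    (z : Basis (Fin 0) ℝ K) (r : Basis (Fin d) ℝ R) (G : (K × R) ≃ₗ[ℝ] A)
    (a : Basis (Fin d) ℝ A) (h : 0 + d = d)
    (hG : Orientation.reindex ℝ A (finCongr h) ((prodBasis z r).map G).orientation =
      a.orientation) :
    0 < a.det (fun i => G (0, r i)) := by
  rw [Orientation.reindex_finCongr_eq_iff] at hG
  convert hG using 2
  ext i
  simp [prodBasis_apply_of_le]

section ShearedBlocks

variable {V W Q : Type*} [AddCommGroup V] [Module ℝ V] [AddCommGroup W] [Module ℝ W]
  [AddCommGroup Q] [Module ℝ Q] {R : Submodule ℝ (V × W)} {d n : ℕ}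

theorem det_mul_det_pos_of_orientation_eq_left (π : V →ₗ[ℝ] W) (F : (R × Q) ≃ₗ[ℝ] V × W)
    (φ : Q ≃ₗ[ℝ] W) (hF : ∀ x, F (x, 0) = x) (hR : ∀ x ∈ R, x.2 + π x.1 = 0)
    (hφ : ∀ y, (F (0, y)).2 + π (F (0, y)).1 = φ y) (r : Basis (Fin d) ℝ R)
    (e : Basis (Fin n) ℝ Q) (b₁ : Basis (Fin d) ℝ V) (b₂ : Basis (Fin n) ℝ W)
    (hFo : ((prodBasis r e).map F).orientation = (prodBasis b₁ b₂).orientation) :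
    0 < b₂.det (e.map φ) * b₁.det (fun i => (r i : V × W).1) := by
  rw [eq_comm, Basis.orientation_eq_iff_det_pos,
    prodBasis_det_of_snd_add_eq_zero _ _ π _ (fun i => by simpa [hF] using hR _ (r i).2)] at hFo
  rw [mul_comm]
  convert hFo using 2 <;> congr 1 <;> ext <;> simp [hF, hφ]

/- After the shear `R` lies in the second factor of `V × W`, but it comes first in `F`: swapping
the blocks costs `(-1) ^ (n * d)`. -/
theorem det_mul_det_pos_of_orientation_eq_right (π : W →ₗ[ℝ] V) (F : (R × Q) ≃ₗ[ℝ] V × W)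
    (φ : Q ≃ₗ[ℝ] V) (hF : ∀ x, F (x, 0) = x) (hR : ∀ x ∈ R, x.1 + π x.2 = 0)
    (hφ : ∀ y, (F (0, y)).1 + π (F (0, y)).2 = φ y) (r : Basis (Fin d) ℝ R)
    (e : Basis (Fin n) ℝ Q) (b₁ : Basis (Fin n) ℝ V) (b₂ : Basis (Fin d) ℝ W) (h : d + n = n + d)
    (hFo : Orientation.reindex ℝ _ (finCongr h) ((prodBasis r e).map F).orientation =
      (prodBasis b₁ b₂).orientation) :
    0 < (-1) ^ (n * d) * b₁.det (e.map φ) * b₂.det (fun i => (r i : V × W).2) := by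
  rw [Orientation.reindex_finCongr_eq_iff, Basis.det_comp_finCast_add_comm,
    prodBasis_det_of_fst_add_eq_zero _ _ π _ (fun i => by simpa [hF] using hR _ (r i).2)] at hFo
  rw [mul_assoc]
  convert hFo using 3 <;> congr 1 <;> ext <;> simp [hF, hφ]

end ShearedBlocks

theorem mul_add_one_div_two (n : ℕ) : n * (n + 1) / 2 = n * (n - 1) / 2 + n := by
  simpa [mul_comm] using Nat.triangle_succ n

theorem neg_one_pow_mul_self_add_triangle (d c : ℕ) :
    (-1 : ℝ) ^ (d * d + d * c + d * c + d * (d - 1) / 2) = (-1) ^ (d * (d + 1) / 2) := by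
  have h : d * d = d * (d - 1) + d := by cases d <;> simp [Nat.mul_succ]
  have := Nat.even_iff.1 (Nat.even_mul_pred_self d)
  rw [neg_one_pow_eq_pow_mod_two, neg_one_pow_eq_pow_mod_two (R := ℝ) (_ / 2),
    mul_add_one_div_two]
  congr 1
  omega

theorem neg_one_pow_mul_add_triangle (m d : ℕ) :
    (-1 : ℝ) ^ (m * d + m * 0 + d * 0 + d * (d - 1) / 2) =
      (-1) ^ (d * (d + 1) / 2) * (-1) ^ d * (-1) ^ (m * d) := by
  rw [← pow_add, ← pow_add, neg_one_pow_eq_pow_mod_two,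
    neg_one_pow_eq_pow_mod_two (R := ℝ) (_ + _), mul_add_one_div_two]
  congr 1
  omega

theorem IsCompositeOrientation.comp_id {A B C : Type*} [AddCommGroup A] [Module ℝ A]
    [AddCommGroup B] [Module ℝ B] [AddCommGroup C] [Module ℝ C]
    {nid ncid na nb nc nk ncok : ℕ} {π : A →ₗ[ℝ] B} {f : A →ₗ[ℝ] A × B} {g : A × B →ₗ[ℝ] B}
    (hf : ∀ x, f x = (x, -π x)) (hg : ∀ p, g p = p.2 + π p.1)
    {μid : Orientation ℝ (A × (A × PUnit)) (Fin (nid + (nid + ncid)))}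
    (hμid : IsIdOrientation μid) {μ : Orientation ℝ (B × (A × C)) (Fin (nb + (na + nc)))}
    {ν : Orientation ℝ (((A × B) ⧸ LinearMap.range f) × (A × (PUnit × (C × LinearMap.ker f))))
      (Fin (ncok + (nid + (ncid + (nc + nk)))))}
    (hν : IsCompositeOrientation f μid μ ν)
    (T : (((A × B) ⧸ LinearMap.range f) × (A × (PUnit × (C × LinearMap.ker f)))) ≃ₗ[ℝ]
      B × (A × C))
    (hT : ∀ (x : A × B) (a : A) (u : PUnit) (c : C) (k : LinearMap.ker f),
      T (Submodule.mkQ (LinearMap.range f) x, (a, (u, (c, k)))) = (g x, (a, c)))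
    (hN : ncok + (nid + (ncid + (nc + nk))) = nb + (na + nc)) :
    Orientation.reindex ℝ _ (finCongr hN) (Orientation.map _ T ν) = μ := by
  have hkg := ker_eq_range_of_eq_neg_graph_left hf hg
  let φ := g.quotEquivOfKerEq (surjective_of_eq_snd_add hg) _ hkg
  let ψ := LinearMap.fst ℝ C (LinearMap.ker f) ∘ₗ LinearMap.snd ℝ PUnit (C × LinearMap.ker f)
  have : Subsingleton (LinearMap.ker f) := by
    rw [ker_eq_bot_of_eq_neg_graph_left hf]; infer_instance
  obtain ⟨a₁, b₁, c₁, a₂, b₂, c₂, r, e, z, F, G, hFi, hGi, hF, hFq, -, hG, hμid₁, rfl, hFo, hGo,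
    rfl⟩ := hν
  obtain rfl : nk = 0 := z.index_eq_zero_of_subsingleton
  obtain rfl : ncid = 0 := c₁.index_eq_zero_of_subsingleton
  obtain rfl : na = finrank ℝ (LinearMap.range f) := by omega
  obtain rfl : nid = finrank ℝ (LinearMap.range f) := by
    simpa using (finrank_eq_card_basis a₁).symm.trans (finrank_eq_card_basis a₂)
  obtain rfl : ncok = nb := by omega
  have H1 := hμid.det_pos b₁ a₁ c₁ hμid₁
  have H2 := det_mul_det_pos_of_orientation_eq_left π F φ hF
    (fun x hx => by rwa [← hg, ← LinearMap.mem_ker, hkg])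
    (fun y => by rw [← hg, ← LinearMap.quotEquivOfKerEq_mk, ← Submodule.mkQ_apply, hFq])
    r e b₁ b₂ (by simpa using hFo)
  have H3 : 0 < 1 * a₂.det (fun i => (r i : A × B).1) := by
    rw [one_mul]
    convert det_pos_of_reindex_map_prodBasis_of_isEmpty z r G a₂ hGi hGo using 3 with i
    simpa [hf] using (congrArg Prod.fst (hG (r i))).symm
  have hT' : ∀ q a u, T (q, (a, u)) = (φ q, (a, ψ u)) := by
    rintro q a ⟨u, c, k⟩
    obtain ⟨x, rfl⟩ := Submodule.mkQ_surjective _ q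
    simpa [φ, ψ] using hT x a u c k
  have hψ : ∀ k, ψ (prodBasis c₁ (prodBasis c₂ z) k) = c₂ (Fin.cast (by omega) k) := fun k => by
    simp only [ψ, LinearMap.coe_comp, Function.comp_apply, prodBasis_apply_of_le c₁ _ k (by simp)]
    exact congrArg Prod.fst (prodBasis_apply_of_lt c₂ z _ (by omega))
  rw [Orientation.reindex_map_ite, map_prodBasis_reindex_eq T φ ψ hT' e a₁ _ c₂ (by omega) hψ,
    Basis.ite_orientation_eq_iff, prodBasis_det_prodBasis, prodBasis_det_prodBasis, c₂.det_self,
    mul_one, neg_one_pow_mul_self_add_triangle]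
  have H12 := a₂.mul_det_pos_trans b₁ a₁ (a₂.mul_det_pos_of_mul_det_pos b₁ _ H2 H3) H1
  exact H12.trans_eq (by ring)

theorem IsCompositeOrientation.id_comp {A B C A' : Type*} [AddCommGroup A] [Module ℝ A]
    [AddCommGroup B] [Module ℝ B] [AddCommGroup C] [Module ℝ C] [AddCommGroup A'] [Module ℝ A']
    {nid ncid na nb nc nk ncok : ℕ} {π : A' →ₗ[ℝ] B} {f : A' →ₗ[ℝ] B × A'} {g : B × A' →ₗ[ℝ] B}
    (hf : ∀ x, f x = (π x, -x)) (hg : ∀ p, g p = p.1 + π p.2)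
    {μid : Orientation ℝ (A' × (A' × PUnit)) (Fin (nid + (nid + ncid)))}
    (hμid : IsIdOrientation μid) {μ : Orientation ℝ (B × (A × C)) (Fin (nb + (na + nc)))}
    {ν : Orientation ℝ (((B × A') ⧸ LinearMap.range f) × (A × (C × (PUnit × LinearMap.ker f))))
      (Fin (ncok + (na + (nc + (ncid + nk)))))}
    (hν : IsCompositeOrientation f μ μid ν)
    (T : (((B × A') ⧸ LinearMap.range f) × (A × (C × (PUnit × LinearMap.ker f)))) ≃ₗ[ℝ]
      B × (A × C))
    (hT : ∀ (x : B × A') (a : A) (c : C) (u : PUnit) (k : LinearMap.ker f),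
      T (Submodule.mkQ (LinearMap.range f) x, (a, (c, (u, k)))) = (g x, (a, c)))
    (hN : ncok + (na + (nc + (ncid + nk))) = nb + (na + nc)) :
    Orientation.reindex ℝ _ (finCongr hN) (Orientation.map _ T ν) = μ := by
  have hkg := ker_eq_range_of_eq_neg_graph_right hf hg
  let φ := g.quotEquivOfKerEq (surjective_of_eq_fst_add hg) _ hkg
  let ψ := LinearMap.fst ℝ C (PUnit × LinearMap.ker f)
  have : Subsingleton (LinearMap.ker f) := by
    rw [ker_eq_bot_of_eq_neg_graph_right hf]; infer_instance
  obtain ⟨a₁, b₁, c₁, a₂, b₂, c₂, r, e, z, F, G, hFi, hGi, hF, hFq, -, hG, rfl, hμid₂, hFo, hGo,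
    rfl⟩ := hν
  obtain rfl : nk = 0 := z.index_eq_zero_of_subsingleton
  obtain rfl : ncid = 0 := c₂.index_eq_zero_of_subsingleton
  obtain rfl : nid = finrank ℝ (LinearMap.range f) := by omega
  obtain rfl : nb = ncok := by omega
  have H1 := hμid.det_pos b₂ a₂ c₂ hμid₂
  have H2 := det_mul_det_pos_of_orientation_eq_right π F φ hF
    (fun x hx => by rwa [← hg, ← LinearMap.mem_ker, hkg])
    (fun y => by rw [← hg, ← LinearMap.quotEquivOfKerEq_mk, ← Submodule.mkQ_apply, hFq])
    r e b₁ b₂ hFi hFo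
  have H3 : 0 < (-1) ^ finrank ℝ (LinearMap.range f) * a₂.det (fun i => (r i : B × A').2) := by
    rw [← Basis.det_neg_apply]
    convert det_pos_of_reindex_map_prodBasis_of_isEmpty z r G a₂ hGi hGo using 3 with i
    rw [← neg_neg (G (0, r i)), eq_comm]
    simpa [hf] using congrArg (fun p => -p.2) (hG (r i))
  have hT' : ∀ q a u, T (q, (a, u)) = (φ q, (a, ψ u)) := by
    rintro q a ⟨c, u, k⟩
    obtain ⟨x, rfl⟩ := Submodule.mkQ_surjective _ q
    simpa [φ, ψ] using hT x a c u k
  have hψ : ∀ k, ψ (prodBasis c₁ (prodBasis c₂ z) k) = c₁ (Fin.cast (by omega) k) := fun k =>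
    congrArg Prod.fst (prodBasis_apply_of_lt c₁ (prodBasis c₂ z) k (by omega))
  rw [Orientation.reindex_map_ite, map_prodBasis_reindex_eq T φ ψ hT' e a₁ _ c₁ (by omega) hψ,
    Basis.ite_orientation_eq_iff, prodBasis_det_prodBasis, prodBasis_det_prodBasis, a₁.det_self,
    c₁.det_self, mul_one, mul_one, neg_one_pow_mul_add_triangle]
  have H13 := b₂.mul_det_pos_trans a₂ _ H1 H3
  exact (pos_mul_of_pos_mul_of_pos_mul H13 H2).trans_eq (by ring)

theorem composite_orientation_units_general
    {A₀ : Type*} [AddCommGroup A₀] [Module ℝ A₀]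
    {A₂ B₂ C₂ : Type*}
    [AddCommGroup A₂] [Module ℝ A₂] [AddCommGroup B₂] [Module ℝ B₂]
    [AddCommGroup C₂] [Module ℝ C₂]
    {A₁ B₁ C₁ A' : Type*}
    [AddCommGroup A₁] [Module ℝ A₁] [AddCommGroup B₁] [Module ℝ B₁]
    [AddCommGroup C₁] [Module ℝ C₁] [AddCommGroup A'] [Module ℝ A']
    {n₀ nc₀ nid ncid na₂ nb₂ nc₂ nk ncok nid' ncid' na₁ nb₁ nc₁ nk' ncok' : ℕ}
    -- left unit data
    (π : A₂ →ₗ[ℝ] B₂)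
    (f : A₂ →ₗ[ℝ] A₂ × B₂) (hfdef : ∀ x : A₂, f x = (x, -π x))
    (μid : Orientation ℝ (A₂ × (A₂ × PUnit)) (Fin (nid + (nid + ncid))))
    (hμid : IsIdOrientation μid)
    (μ₂ : Orientation ℝ (B₂ × (A₂ × C₂)) (Fin (nb₂ + (na₂ + nc₂))))
    (ν : Orientation ℝ
      (((A₂ × B₂) ⧸ LinearMap.range f) × (A₂ × (PUnit × (C₂ × ↥(LinearMap.ker f)))))
      (Fin (ncok + (nid + (ncid + (nc₂ + nk))))))
    (hν : IsCompositeOrientation f μid μ₂ ν)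
    (g : A₂ × B₂ →ₗ[ℝ] B₂) (hgdef : ∀ p : A₂ × B₂, g p = p.2 + π p.1)
    -- right unit data
    (π' : A' →ₗ[ℝ] B₁)
    (f' : A' →ₗ[ℝ] B₁ × A') (hf'def : ∀ x : A', f' x = (π' x, -x))
    (μid' : Orientation ℝ (A' × (A' × PUnit)) (Fin (nid' + (nid' + ncid'))))
    (hμid' : IsIdOrientation μid')
    (μ₁ : Orientation ℝ (B₁ × (A₁ × C₁)) (Fin (nb₁ + (na₁ + nc₁))))
    (ν' : Orientation ℝ
      (((B₁ × A') ⧸ LinearMap.range f') × (A₁ × (C₁ × (PUnit × ↥(LinearMap.ker f')))))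
      (Fin (ncok' + (na₁ + (nc₁ + (ncid' + nk'))))))
    (hν' : IsCompositeOrientation f' μ₁ μid' ν')
    (g' : B₁ × A' →ₗ[ℝ] B₁) (hg'def : ∀ p : B₁ × A', g' p = p.1 + π' p.2) :
    -- the identity orientation is independent of the choice in its definition
    (∀ μ μ' : Orientation ℝ (A₀ × (A₀ × PUnit)) (Fin (n₀ + (n₀ + nc₀))),
      IsIdOrientation μ → IsIdOrientation μ' → μ = μ') ∧
    -- left unit
    LinearMap.ker f = ⊥ ∧
    LinearMap.ker g = LinearMap.range f ∧ Function.Surjective g ∧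
    (∀ T : ((((A₂ × B₂) ⧸ LinearMap.range f) ×
          (A₂ × (PUnit × (C₂ × ↥(LinearMap.ker f))))) ≃ₗ[ℝ] B₂ × (A₂ × C₂)),
      (∀ (x : A₂ × B₂) (a : A₂) (u : PUnit) (c : C₂) (k : ↥(LinearMap.ker f)),
        T (Submodule.mkQ (LinearMap.range f) x, (a, (u, (c, k)))) = (g x, (a, c))) →
      ∀ hN : ncok + (nid + (ncid + (nc₂ + nk))) = nb₂ + (na₂ + nc₂),
        Orientation.reindex ℝ _ (finCongr hN)
          (Orientation.map (Fin (ncok + (nid + (ncid + (nc₂ + nk))))) T ν) = μ₂) ∧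
    -- right unit
    LinearMap.ker f' = ⊥ ∧
    LinearMap.ker g' = LinearMap.range f' ∧ Function.Surjective g' ∧
    (∀ T' : ((((B₁ × A') ⧸ LinearMap.range f') ×
          (A₁ × (C₁ × (PUnit × ↥(LinearMap.ker f'))))) ≃ₗ[ℝ] B₁ × (A₁ × C₁)),
      (∀ (x : B₁ × A') (a : A₁) (c : C₁) (u : PUnit) (k : ↥(LinearMap.ker f')),
        T' (Submodule.mkQ (LinearMap.range f') x, (a, (c, (u, k)))) = (g' x, (a, c))) →
      ∀ hN' : ncok' + (na₁ + (nc₁ + (ncid' + nk'))) = nb₁ + (na₁ + nc₁),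
        Orientation.reindex ℝ _ (finCongr hN')
          (Orientation.map (Fin (ncok' + (na₁ + (nc₁ + (ncid' + nk'))))) T' ν') = μ₁) := by
  refine ⟨fun μ μ' hμ hμ' => hμ.eq hμ', ker_eq_bot_of_eq_neg_graph_left hfdef,
    ker_eq_range_of_eq_neg_graph_left hfdef hgdef, surjective_of_eq_snd_add hgdef,
    fun T hT hN => hν.comp_id hfdef hgdef hμid T hT hN, ker_eq_bot_of_eq_neg_graph_right hf'def,
    ker_eq_range_of_eq_neg_graph_right hf'def hg'def, surjective_of_eq_fst_add hg'def,
    fun T hT hN => hν'.id_comp hf'def hg'def hμid' T hT hN⟩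

/-- **Unit property of the composition of orientations.**  The identity orientation datum
is independent of the choice made in its definition; moreover it is a left and a right unit
for the composition of orientations: with `f(x) = (x, −π x)` (resp. `f'(x) = (π' x, −x)`)
one has `ker f = 0`, the map `(a, b) ↦ b + π a` (resp. `(b, a) ↦ b + π' a`) induces an
isomorphism `coker f ≅ B₂` (resp. `coker f' ≅ B₁`), and under these identifications
`μ₂ ∘_f μ^id = μ₂` (resp. `μ^id ∘_{f'} μ₁ = μ₁`). -/
theorem composite_orientation_units
    {A₀ : Type*} [AddCommGroup A₀] [Module ℝ A₀] [FiniteDimensional ℝ A₀]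
    {A₂ B₂ C₂ : Type*}
    [AddCommGroup A₂] [Module ℝ A₂] [AddCommGroup B₂] [Module ℝ B₂]
    [AddCommGroup C₂] [Module ℝ C₂]
    [FiniteDimensional ℝ A₂] [FiniteDimensional ℝ B₂] [FiniteDimensional ℝ C₂]
    {A₁ B₁ C₁ A' : Type*}
    [AddCommGroup A₁] [Module ℝ A₁] [AddCommGroup B₁] [Module ℝ B₁]
    [AddCommGroup C₁] [Module ℝ C₁] [AddCommGroup A'] [Module ℝ A']
    [FiniteDimensional ℝ A₁] [FiniteDimensional ℝ B₁] [FiniteDimensional ℝ C₁]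
    [FiniteDimensional ℝ A']
    {n₀ nc₀ nid ncid na₂ nb₂ nc₂ nk ncok nid' ncid' na₁ nb₁ nc₁ nk' ncok' : ℕ}
    -- left unit data
    (π : A₂ →ₗ[ℝ] B₂)
    (f : A₂ →ₗ[ℝ] A₂ × B₂) (hfdef : ∀ x : A₂, f x = (x, -π x))
    (μid : Orientation ℝ (A₂ × (A₂ × PUnit)) (Fin (nid + (nid + ncid))))
    (hμid : IsIdOrientation μid)
    (μ₂ : Orientation ℝ (B₂ × (A₂ × C₂)) (Fin (nb₂ + (na₂ + nc₂))))
    (ν : Orientation ℝ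
      (((A₂ × B₂) ⧸ LinearMap.range f) × (A₂ × (PUnit × (C₂ × ↥(LinearMap.ker f)))))
      (Fin (ncok + (nid + (ncid + (nc₂ + nk))))))
    (hν : IsCompositeOrientation f μid μ₂ ν)
    (g : A₂ × B₂ →ₗ[ℝ] B₂) (hgdef : ∀ p : A₂ × B₂, g p = p.2 + π p.1)
    -- right unit data
    (π' : A' →ₗ[ℝ] B₁)
    (f' : A' →ₗ[ℝ] B₁ × A') (hf'def : ∀ x : A', f' x = (π' x, -x))
    (μid' : Orientation ℝ (A' × (A' × PUnit)) (Fin (nid' + (nid' + ncid'))))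
    (hμid' : IsIdOrientation μid')
    (μ₁ : Orientation ℝ (B₁ × (A₁ × C₁)) (Fin (nb₁ + (na₁ + nc₁))))
    (ν' : Orientation ℝ
      (((B₁ × A') ⧸ LinearMap.range f') × (A₁ × (C₁ × (PUnit × ↥(LinearMap.ker f')))))
      (Fin (ncok' + (na₁ + (nc₁ + (ncid' + nk'))))))
    (hν' : IsCompositeOrientation f' μ₁ μid' ν')
    (g' : B₁ × A' →ₗ[ℝ] B₁) (hg'def : ∀ p : B₁ × A', g' p = p.1 + π' p.2) :
    -- the identity orientation is independent of the choice in its definition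
    (∀ μ μ' : Orientation ℝ (A₀ × (A₀ × PUnit)) (Fin (n₀ + (n₀ + nc₀))),
      IsIdOrientation μ → IsIdOrientation μ' → μ = μ') ∧
    -- left unit
    LinearMap.ker f = ⊥ ∧
    LinearMap.ker g = LinearMap.range f ∧ Function.Surjective g ∧
    (∀ T : ((((A₂ × B₂) ⧸ LinearMap.range f) ×
          (A₂ × (PUnit × (C₂ × ↥(LinearMap.ker f))))) ≃ₗ[ℝ] B₂ × (A₂ × C₂)),
      (∀ (x : A₂ × B₂) (a : A₂) (u : PUnit) (c : C₂) (k : ↥(LinearMap.ker f)),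
        T (Submodule.mkQ (LinearMap.range f) x, (a, (u, (c, k)))) = (g x, (a, c))) →
      ∀ hN : ncok + (nid + (ncid + (nc₂ + nk))) = nb₂ + (na₂ + nc₂),
        Orientation.reindex ℝ _ (finCongr hN)
          (Orientation.map (Fin (ncok + (nid + (ncid + (nc₂ + nk))))) T ν) = μ₂) ∧
    -- right unit
    LinearMap.ker f' = ⊥ ∧
    LinearMap.ker g' = LinearMap.range f' ∧ Function.Surjective g' ∧
    (∀ T' : ((((B₁ × A') ⧸ LinearMap.range f') ×
          (A₁ × (C₁ × (PUnit × ↥(LinearMap.ker f'))))) ≃ₗ[ℝ] B₁ × (A₁ × C₁)),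
      (∀ (x : B₁ × A') (a : A₁) (c : C₁) (u : PUnit) (k : ↥(LinearMap.ker f')),
        T' (Submodule.mkQ (LinearMap.range f') x, (a, (c, (u, k)))) = (g' x, (a, c))) →
      ∀ hN' : ncok' + (na₁ + (nc₁ + (ncid' + nk'))) = nb₁ + (na₁ + nc₁),
        Orientation.reindex ℝ _ (finCongr hN')
          (Orientation.map (Fin (ncok' + (na₁ + (nc₁ + (ncid' + nk'))))) T' ν') = μ₁) :=
  composite_orientation_units_general π f hfdef μid hμid μ₂ ν hν g hgdef π' f' hf'def μid' hμid' μ₁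
    ν' hν' g' hg'def

end
end

section
/- Well-definedness of the composition of orientations. Let (A_i, B_i, C_i, μ_i) for i = 1, 2 be orientation data and f : A₂ → B₁ ⊕ B₂ a linear map. Then the composite orientation μ₂ ∘_f μ₁ of coker(f) ⊕ A₁ ⊕ (C₁ ⊕ C₂ ⊕ ker(f)) is independent of all the choices made in its definition: the decompositions μ_i = β_i ∧ α_i ∧ γ_i, the orientation δ of im(f), and the splitting isomorphisms F and G. -/
open Module

noncomputable section

section Aux


variable {V W : Type*} [AddCommGroup V] [Module ℝ V] [AddCommGroup W] [Module ℝ W]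

lemma det_basis_equiv {m : ℕ} (bv bv' : Basis (Fin m) ℝ V) :
    LinearMap.det ((bv.equiv bv' (Equiv.refl _)).toLinearMap) = bv.det bv' := by
  have h : ⇑(bv.equiv bv' (Equiv.refl _)) ∘ ⇑bv = ⇑bv' := by
    funext i; simp
  have := Basis.det_comp bv ((bv.equiv bv' (Equiv.refl _)).toLinearMap) bv
  rw [show (⇑(bv.equiv bv' (Equiv.refl _)).toLinearMap ∘ ⇑bv) = ⇑bv' from h] at this
  rw [Basis.det_self, mul_one] at this
  exact this.symm

lemma prod_basis_det {m n : ℕ} (bv bv' : Basis (Fin m) ℝ V) (bw bw' : Basis (Fin n) ℝ W) :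
    (bv.prod bw).det (bv'.prod bw') = bv.det bv' * bw.det bw' := by
  classical
  set e1 := bv.equiv bv' (Equiv.refl _) with he1
  set e2 := bw.equiv bw' (Equiv.refl _) with he2
  have hcomp : ⇑(bv'.prod bw') =
      ⇑(LinearMap.prodMap e1.toLinearMap e2.toLinearMap) ∘ ⇑(bv.prod bw) := by
    funext i
    rcases i with i | i <;>
      simp [Basis.prod_apply, he1, he2]
  rw [hcomp, Basis.det_comp, Basis.det_self, mul_one]
  rw [← LinearMap.det_toMatrix (bv.prod bw),
    LinearMap.toMatrix_prodMap bv bw e1.toLinearMap e2.toLinearMap,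
    Matrix.det_fromBlocks_zero₂₁, LinearMap.det_toMatrix, LinearMap.det_toMatrix,
    det_basis_equiv, det_basis_equiv]

lemma prodBasis_det {m n : ℕ} (bv bv' : Basis (Fin m) ℝ V) (bw bw' : Basis (Fin n) ℝ W) :
    (prodBasis bv bw).det (prodBasis bv' bw') = bv.det bv' * bw.det bw' := by
  rw [prodBasis, prodBasis, Basis.det_reindex]
  rw [show ⇑((bv'.prod bw').reindex finSumFinEquiv) ∘ ⇑finSumFinEquiv = ⇑(bv'.prod bw') by
    funext i; simp]
  exact prod_basis_det bv bv' bw bw'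

lemma det_triangular {m n : ℕ} (bU : Basis (Fin m) ℝ V) (bW : Basis (Fin n) ℝ W)
    (H : (V × W) →ₗ[ℝ] (V × W)) (h1 : ∀ x : V, H (x, 0) = (x, 0))
    (h2 : ∀ y : W, (H (0, y)).2 = y) :
    LinearMap.det H = 1 := by
  classical
  rw [← LinearMap.det_toMatrix (bU.prod bW)]
  have hm : LinearMap.toMatrix (bU.prod bW) (bU.prod bW) H =
      Matrix.fromBlocks 1 (Matrix.of fun i j => bU.repr (H (0, bW j)).1 i) 0 1 := by
    ext i j
    rcases i with i | i <;> rcases j with j | j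
    · simp [LinearMap.toMatrix_apply, Basis.prod_apply, h1, Basis.prod_repr_inl,
        Matrix.one_apply, Finsupp.single_apply, eq_comm]
    · simp [LinearMap.toMatrix_apply, Basis.prod_apply, Basis.prod_repr_inl]
    · simp [LinearMap.toMatrix_apply, Basis.prod_apply, h1, Basis.prod_repr_inr]
    · simp [LinearMap.toMatrix_apply, Basis.prod_apply, h2, Basis.prod_repr_inr,
        Matrix.one_apply, Finsupp.single_apply, eq_comm]
  rw [hm, Matrix.det_fromBlocks_zero₂₁, Matrix.det_one, Matrix.det_one, mul_one]

end Aux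

section Aux2

lemma det_map_map {N M : Type*} [AddCommGroup N] [Module ℝ N] [AddCommGroup M] [Module ℝ M]
    {p : ℕ} (b b' : Basis (Fin p) ℝ N) (F F' : N ≃ₗ[ℝ] M) :
    (b.map F).det (b'.map F') =
      LinearMap.det (F.symm.toLinearMap ∘ₗ F'.toLinearMap) * b.det b' := by
  rw [Basis.det_map]
  rw [show (⇑F.symm ∘ ⇑(b'.map F')) = ⇑(F.symm.toLinearMap ∘ₗ F'.toLinearMap) ∘ ⇑b' by
    funext i; simp [Basis.map_apply]]
  rw [Basis.det_comp]

lemma det_unip {U W M : Type*} [AddCommGroup U] [Module ℝ U] [AddCommGroup W] [Module ℝ W]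
    [AddCommGroup M] [Module ℝ M] {m n : ℕ} (bU : Basis (Fin m) ℝ U) (bW : Basis (Fin n) ℝ W)
    (F F' : (U × W) ≃ₗ[ℝ] M) (j : U →ₗ[ℝ] M) (π : M →ₗ[ℝ] W)
    (hπj : ∀ x, π (j x) = 0)
    (hF1 : ∀ x, F (x, 0) = j x) (hF2 : ∀ y, π (F (0, y)) = y)
    (hF1' : ∀ x, F' (x, 0) = j x) (hF2' : ∀ y, π (F' (0, y)) = y) :
    LinearMap.det (F.symm.toLinearMap ∘ₗ F'.toLinearMap) = 1 := by
  apply det_triangular bU bW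
  · intro x
    have h : F' (x, 0) = F (x, 0) := by rw [hF1, hF1']
    simp [LinearMap.comp_apply, h]
  · intro y
    set v := F.symm (F' (0, y)) with hv
    have hπy : π (F v) = y := by rw [LinearEquiv.apply_symm_apply]; exact hF2' y
    have hsplit : F v = F (v.1, 0) + F (0, v.2) := by
      rw [← map_add]; congr 1; exact Prod.ext (by simp) (by simp)
    rw [hsplit, map_add, hF1, hπj, hF2, zero_add] at hπy
    exact hπy

lemma pos_mul_of_pos_iff {a b : ℝ} (h : (0 < a) ↔ (0 < b)) (ha : a ≠ 0) (hb : b ≠ 0) :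
    0 < a * b := by
  rcases ha.lt_or_gt with h1 | h1
  · have h2 : b < 0 := by
      rcases hb.lt_or_gt with h2 | h2
      · exact h2
      · exact absurd (h.mpr h2) (not_lt.mpr h1.le)
    exact mul_pos_of_neg_of_neg h1 h2
  · exact mul_pos h1 (h.mp h1)

end Aux2

/-- **Well-definedness of the composition of orientations.**  The composite orientation
`μ₂ ∘_f μ₁` is independent of all the choices made in its definition. -/
theorem composite_orientation_well_defined
    {A₁ B₁ C₁ A₂ B₂ C₂ : Type*}
    [AddCommGroup A₁] [Module ℝ A₁] [AddCommGroup B₁] [Module ℝ B₁]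
    [AddCommGroup C₁] [Module ℝ C₁] [AddCommGroup A₂] [Module ℝ A₂]
    [AddCommGroup B₂] [Module ℝ B₂] [AddCommGroup C₂] [Module ℝ C₂]
    [FiniteDimensional ℝ A₁] [FiniteDimensional ℝ B₁] [FiniteDimensional ℝ C₁]
    [FiniteDimensional ℝ A₂] [FiniteDimensional ℝ B₂] [FiniteDimensional ℝ C₂]
    {na₁ nb₁ nc₁ na₂ nb₂ nc₂ nk ncok : ℕ}
    (f : A₂ →ₗ[ℝ] B₁ × B₂)
    (μ₁ : Orientation ℝ (B₁ × (A₁ × C₁)) (Fin (nb₁ + (na₁ + nc₁))))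
    (μ₂ : Orientation ℝ (B₂ × (A₂ × C₂)) (Fin (nb₂ + (na₂ + nc₂))))
    (ν ν' : Orientation ℝ
      (((B₁ × B₂) ⧸ LinearMap.range f) × (A₁ × (C₁ × (C₂ × ↥(LinearMap.ker f)))))
      (Fin (ncok + (na₁ + (nc₁ + (nc₂ + nk))))))
    (hν : IsCompositeOrientation f μ₁ μ₂ ν)
    (hν' : IsCompositeOrientation f μ₁ μ₂ ν') :
    ν = ν' := by
  classical
  obtain ⟨a₁, b₁, c₁, a₂, b₂, c₂, dl, e, z, F, G, hFi, hGi, hF1, hF2, hG1, hG2,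
    hμ₁, hμ₂, hF, hG, hνe⟩ := hν
  obtain ⟨a₁', b₁', c₁', a₂', b₂', c₂', dl', e', z', F', G', hFi', hGi', hF1', hF2', hG1', hG2',
    hμ₁', hμ₂', hF', hG', hνe'⟩ := hν'
  -- nonvanishing of the various comparison determinants
  have hda₁ := (a₁.isUnit_det a₁').ne_zero
  have hdb₁ := (b₁.isUnit_det b₁').ne_zero
  have hdc₁ := (c₁.isUnit_det c₁').ne_zero
  have hda₂ := (a₂.isUnit_det a₂').ne_zero
  have hdb₂ := (b₂.isUnit_det b₂').ne_zero
  have hdc₂ := (c₂.isUnit_det c₂').ne_zero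
  have hddl := (dl.isUnit_det dl').ne_zero
  have hde := (e.isUnit_det e').ne_zero
  have hdz := (z.isUnit_det z').ne_zero
  -- sign relations from μ₁ and μ₂
  have h1 : 0 < b₁.det b₁' * (a₁.det a₁' * c₁.det c₁') := by
    have h := hμ₁.symm.trans hμ₁'
    rw [Basis.orientation_eq_iff_det_pos] at h
    simp only [prodBasis_det] at h
    exact h
  have h2 : 0 < b₂.det b₂' * (a₂.det a₂' * c₂.det c₂') := by
    have h := hμ₂.symm.trans hμ₂'
    rw [Basis.orientation_eq_iff_det_pos] at h
    simp only [prodBasis_det] at h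
    exact h
  -- sign relation from F
  have hunipF : LinearMap.det (F.symm.toLinearMap ∘ₗ F'.toLinearMap) = 1 := by
    refine det_unip dl e F F' (LinearMap.range f).subtype
      (Submodule.mkQ (LinearMap.range f)) ?_ hF1 hF2 hF1' hF2'
    intro x
    simp [Submodule.Quotient.mk_eq_zero]
  have hunipG : LinearMap.det (G.symm.toLinearMap ∘ₗ G'.toLinearMap) = 1 := by
    refine det_unip z dl G G' (LinearMap.ker f).subtype f.rangeRestrict ?_ hG1 ?_ hG1' ?_
    · intro x
      exact Subtype.ext (by simp [x.2])
    · intro y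
      exact Subtype.ext (by simpa using hG2 y)
    · intro y
      exact Subtype.ext (by simpa using hG2' y)
  have hFiff : (0 < dl.det dl' * e.det e') ↔ (0 < b₁.det b₁' * b₂.det b₂') := by
    have hX : ((prodBasis dl e).map F).orientation = ((prodBasis dl' e').map F').orientation ↔
        (prodBasis b₁ b₂).orientation = (prodBasis b₁' b₂').orientation := by
      rw [← hF, ← hF']
      exact ((Orientation.reindex ℝ _ (finCongr hFi)).injective.eq_iff).symm
    simp only [Basis.orientation_eq_iff_det_pos] at hX
    rw [det_map_map, hunipF, one_mul, prodBasis_det, prodBasis_det] at hX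
    exact hX
  have hGiff : (0 < z.det z' * dl.det dl') ↔ (0 < a₂.det a₂') := by
    have hX : ((prodBasis z dl).map G).orientation = ((prodBasis z' dl').map G').orientation ↔
        a₂.orientation = a₂'.orientation := by
      rw [← hG, ← hG']
      exact ((Orientation.reindex ℝ _ (finCongr hGi)).injective.eq_iff).symm
    simp only [Basis.orientation_eq_iff_det_pos] at hX
    rw [det_map_map, hunipG, one_mul, prodBasis_det] at hX
    exact hX
  have h3 : 0 < (dl.det dl' * e.det e') * (b₁.det b₁' * b₂.det b₂') :=
    pos_mul_of_pos_iff hFiff (mul_ne_zero hddl hde) (mul_ne_zero hdb₁ hdb₂)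
  have h4 : 0 < (z.det z' * dl.det dl') * a₂.det a₂' :=
    pos_mul_of_pos_iff hGiff (mul_ne_zero hdz hddl) hda₂
  -- the main orientation equality
  have key : (prodBasis e (prodBasis a₁ (prodBasis c₁ (prodBasis c₂ z)))).orientation
      = (prodBasis e' (prodBasis a₁' (prodBasis c₁' (prodBasis c₂' z')))).orientation := by
    rw [Basis.orientation_eq_iff_det_pos]
    simp only [prodBasis_det]
    have hbig : 0 < (b₁.det b₁' * (a₁.det a₁' * c₁.det c₁')) *
        ((b₂.det b₂' * (a₂.det a₂' * c₂.det c₂')) *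
          (((dl.det dl' * e.det e') * (b₁.det b₁' * b₂.det b₂')) *
            ((z.det z' * dl.det dl') * a₂.det a₂'))) :=
      mul_pos h1 (mul_pos h2 (mul_pos h3 h4))
    have hK : (b₁.det b₁' * b₂.det b₂' * dl.det dl' * a₂.det a₂') ≠ 0 :=
      mul_ne_zero (mul_ne_zero (mul_ne_zero hdb₁ hdb₂) hddl) hda₂
    have hsq : 0 < (b₁.det b₁' * b₂.det b₂' * dl.det dl' * a₂.det a₂') ^ 2 :=
      (sq_nonneg _).lt_of_ne (Ne.symm (pow_ne_zero 2 hK))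
    have hid : (b₁.det b₁' * (a₁.det a₁' * c₁.det c₁')) *
        ((b₂.det b₂' * (a₂.det a₂' * c₂.det c₂')) *
          (((dl.det dl' * e.det e') * (b₁.det b₁' * b₂.det b₂')) *
            ((z.det z' * dl.det dl') * a₂.det a₂'))) =
        (b₁.det b₁' * b₂.det b₂' * dl.det dl' * a₂.det a₂') ^ 2 *
          (e.det e' * (a₁.det a₁' * (c₁.det c₁' * (c₂.det c₂' * z.det z')))) := by ring
    rw [hid] at hbig
    by_contra hc
    push_neg at hc
    exact absurd hbig (not_lt.mpr (mul_nonpos_of_nonneg_of_nonpos hsq.le hc))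
  rw [hνe, hνe', key]


end
end

section
/- Kernel decomposition for composable Mayer–Vietoris maps. With the maps f₁₂, f₂₃, f, f₍₁₂,₃₎, f₍₁,₂₃₎ as in the context: the map a ↦ (a, 0) carries ker(f₁₂) into ker(f), the projection (a₂, a₃) ↦ a₃ carries ker(f) into ker(f₍₁₂,₃₎), and the resulting sequence 0 → ker(f₁₂) → ker(f) → ker(f₍₁₂,₃₎) → 0 is a short exact sequence. Symmetrically, a ↦ (0, a) carries ker(f₂₃) into ker(f), (a₂, a₃) ↦ a₂ carries ker(f) into ker(f₍₁,₂₃₎), and 0 → ker(f₂₃) → ker(f) → ker(f₍₁,₂₃₎) → 0 is a short exact sequence. In particular ker(f) ≅ ker(f₁₂) ⊕ ker(f₍₁₂,₃₎) ≅ ker(f₂₃) ⊕ ker(f₍₁,₂₃₎). -/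
/-!
Restrict the split exact sequence `0 → A₂ → A₂ × A₃ → A₃ → 0` to the submodule `ker f`. Its
intersection with `A₂` is `ker f₁₂`, and `a₃` lifts to `ker f` exactly when
`(0, (f₂₃ a₃)₁) ∈ range f₁₂` and `(f₂₃ a₃)₂ = 0`, i.e. when `a₃ ∈ ker f₍₁₂,₃₎`. Over a field the
restricted sequence splits. The other sequence comes from `0 → A₃ → A₂ × A₃ → A₂ → 0` in the
same way.
-/

open Function LinearMap

theorem Function.Exact.nonempty_linearEquiv_prod {R M N P : Type*} [Semiring R]
    [AddCommGroup M] [AddCommGroup N] [AddCommGroup P] [Module R M] [Module R N] [Module R P]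
    [Module.Projective R P] {f : M →ₗ[R] N} {g : N →ₗ[R] P}
    (h : Exact f g) (hf : Injective f) (hg : Surjective g) : Nonempty (N ≃ₗ[R] M × P) :=
  let ⟨l, hl⟩ := g.exists_rightInverse_of_surjective (range_eq_top.2 hg)
  ⟨(h.splitSurjectiveEquiv hf ⟨l, hl⟩).1⟩

section Restrict

variable {R M V W : Type*} [Ring R] [AddCommGroup M] [AddCommGroup V] [AddCommGroup W]
  [Module R M] [Module R V] [Module R W] {i : M →ₗ[R] V} {p : V →ₗ[R] W}

theorem Function.Exact.shortExact_restrict (h : Exact i p) (hi : Injective i)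
    (K : Submodule R V) {A : Submodule R M} {C : Submodule R W}
    (hA : K.comap i = A) (hC : K.map p = C) [Module.Projective R C] :
    (∀ a ∈ A, i a ∈ K) ∧ (∀ v ∈ K, p v ∈ C) ∧ (∀ a ∈ A, i a = 0 → a = 0) ∧
      (∀ v ∈ K, (p v = 0 ↔ ∃ a ∈ A, v = i a)) ∧ (∀ c ∈ C, ∃ v ∈ K, p v = c) ∧
      Nonempty (K ≃ₗ[R] A × C) := by
  subst hA hC
  have hi_mem : ∀ a ∈ K.comap i, i a ∈ K := fun _ ha ↦ ha
  have hp_mem : ∀ v ∈ K, p v ∈ K.map p := fun _ hv ↦ Submodule.mem_map_of_mem hv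
  have hexact : ∀ v ∈ K, (p v = 0 ↔ ∃ a ∈ K.comap i, v = i a) := fun v hv ↦ by
    rw [h v]
    exact ⟨fun ⟨a, ha⟩ ↦ ⟨a, show i a ∈ K from ha ▸ hv, ha.symm⟩, fun ⟨a, _, ha⟩ ↦ ⟨a, ha.symm⟩⟩
  have hsurj : ∀ c ∈ K.map p, ∃ v ∈ K, p v = c := fun _ hc ↦ hc
  refine ⟨hi_mem, hp_mem, fun a _ ha ↦ hi (ha.trans i.map_zero.symm), hexact, hsurj, ?_⟩
  refine Exact.nonempty_linearEquiv_prod (f := i.restrict hi_mem) (g := p.restrict hp_mem)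
    (fun v ↦ ?_) (fun a b hab ↦ Subtype.ext (hi congr($hab.1))) (fun ⟨c, hc⟩ ↦ ?_)
  · simp only [Subtype.ext_iff, restrict_apply, Submodule.coe_zero, hexact v v.2, Set.mem_range]
    exact ⟨fun ⟨a, ha, hv⟩ ↦ ⟨⟨a, ha⟩, hv.symm⟩, fun ⟨a, hv⟩ ↦ ⟨a, a.2, hv.symm⟩⟩
  · obtain ⟨v, hv, rfl⟩ := hsurj c hc
    exact ⟨⟨v, hv⟩, rfl⟩

end Restrict

namespace MayerVietoris

variable {R A₂ A₃ B₁ B₂ B₃ : Type*} [Ring R]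
  [AddCommGroup A₂] [Module R A₂] [AddCommGroup A₃] [Module R A₃]
  [AddCommGroup B₁] [Module R B₁] [AddCommGroup B₂] [Module R B₂]
  [AddCommGroup B₃] [Module R B₃]
  {f₁₂ : A₂ →ₗ[R] B₁ × B₂} {f₂₃ : A₃ →ₗ[R] B₂ × B₃} {f : A₂ × A₃ →ₗ[R] B₁ × B₂ × B₃}

variable (hf : ∀ p : A₂ × A₃, f p = ((f₁₂ p.1).1, ((f₁₂ p.1).2 + (f₂₃ p.2).1, (f₂₃ p.2).2)))
include hf

theorem comap_inl_ker : (ker f).comap (inl R A₂ A₃) = ker f₁₂ := by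
  ext a
  simp [hf, Prod.ext_iff]

theorem comap_inr_ker : (ker f).comap (inr R A₂ A₃) = ker f₂₃ := by
  ext a
  simp [hf, Prod.ext_iff]

theorem map_snd_ker {g : A₃ →ₗ[R] ((B₁ × B₂) ⧸ range f₁₂) × B₃}
    (hg : ∀ a, g a = ((range f₁₂).mkQ (0, (f₂₃ a).1), (f₂₃ a).2)) :
    (ker f).map (snd R A₂ A₃) = ker g := by
  ext c
  simp only [Submodule.mem_map, mem_ker, snd_apply, hf, hg, Prod.ext_iff, Prod.fst_zero,
    Prod.snd_zero, Submodule.mkQ_apply, Submodule.Quotient.mk_eq_zero, mem_range]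
  constructor
  · rintro ⟨⟨a, c⟩, ⟨h₁, h₂, h₃⟩, rfl⟩
    exact ⟨⟨-a, by simp [h₁], by simpa using neg_eq_of_add_eq_zero_right h₂⟩, h₃⟩
  · rintro ⟨⟨a, h₁, h₂⟩, h₃⟩
    exact ⟨(-a, c), ⟨by simp [h₁], by simp [h₂], h₃⟩, rfl⟩

theorem map_fst_ker {g' : A₂ →ₗ[R] B₁ × ((B₂ × B₃) ⧸ range f₂₃)}
    (hg' : ∀ a, g' a = ((f₁₂ a).1, (range f₂₃).mkQ ((f₁₂ a).2, 0))) :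
    (ker f).map (fst R A₂ A₃) = ker g' := by
  ext c
  simp only [Submodule.mem_map, mem_ker, fst_apply, hf, hg', Prod.ext_iff, Prod.fst_zero,
    Prod.snd_zero, Submodule.mkQ_apply, Submodule.Quotient.mk_eq_zero, mem_range]
  constructor
  · rintro ⟨⟨c, a⟩, ⟨h₁, h₂, h₃⟩, rfl⟩
    exact ⟨h₁, -a, by simpa using neg_eq_of_add_eq_zero_left h₂, by simp [h₃]⟩
  · rintro ⟨h₁, a, h₂, h₃⟩
    exact ⟨(c, -a), ⟨h₁, by simp [h₂], by simp [h₃]⟩, rfl⟩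

end MayerVietoris

open MayerVietoris

/-- **Kernel decomposition for composable Mayer–Vietoris maps.**  With
`f(a₂, a₃) = ((f₁₂a₂)₁, (f₁₂a₂)₂ + (f₂₃a₃)₁, (f₂₃a₃)₂)`,
`f₍₁₂,₃₎ = g` and `f₍₁,₂₃₎ = g'` as in the paper, there are short exact sequences
`0 → ker f₁₂ → ker f → ker f₍₁₂,₃₎ → 0` (via `a ↦ (a,0)` and `(a₂,a₃) ↦ a₃`) and
`0 → ker f₂₃ → ker f → ker f₍₁,₂₃₎ → 0` (via `a ↦ (0,a)` and `(a₂,a₃) ↦ a₂`); in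
particular `ker f ≅ ker f₁₂ ⊕ ker f₍₁₂,₃₎ ≅ ker f₂₃ ⊕ ker f₍₁,₂₃₎`. -/
theorem mayerVietoris_kernel_decomposition
    {A₂ A₃ B₁ B₂ B₃ : Type*}
    [AddCommGroup A₂] [Module ℝ A₂] [AddCommGroup A₃] [Module ℝ A₃]
    [AddCommGroup B₁] [Module ℝ B₁] [AddCommGroup B₂] [Module ℝ B₂]
    [AddCommGroup B₃] [Module ℝ B₃]
    (f₁₂ : A₂ →ₗ[ℝ] B₁ × B₂) (f₂₃ : A₃ →ₗ[ℝ] B₂ × B₃)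
    (f : A₂ × A₃ →ₗ[ℝ] B₁ × B₂ × B₃)
    (hf : ∀ p : A₂ × A₃,
      f p = ((f₁₂ p.1).1, ((f₁₂ p.1).2 + (f₂₃ p.2).1, (f₂₃ p.2).2)))
    (g : A₃ →ₗ[ℝ] ((B₁ × B₂) ⧸ LinearMap.range f₁₂) × B₃)
    (hg : ∀ a : A₃,
      g a = (Submodule.mkQ (LinearMap.range f₁₂) (0, (f₂₃ a).1), (f₂₃ a).2))
    (g' : A₂ →ₗ[ℝ] B₁ × ((B₂ × B₃) ⧸ LinearMap.range f₂₃))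
    (hg' : ∀ a : A₂,
      g' a = ((f₁₂ a).1, Submodule.mkQ (LinearMap.range f₂₃) ((f₁₂ a).2, 0))) :
    -- first short exact sequence
    (∀ a ∈ LinearMap.ker f₁₂, ((a, 0) : A₂ × A₃) ∈ LinearMap.ker f) ∧
    (∀ p ∈ LinearMap.ker f, p.2 ∈ LinearMap.ker g) ∧
    (∀ a ∈ LinearMap.ker f₁₂, ((a, 0) : A₂ × A₃) = 0 → a = 0) ∧
    (∀ p ∈ LinearMap.ker f, (p.2 = 0 ↔ ∃ a ∈ LinearMap.ker f₁₂, p = ((a, 0) : A₂ × A₃))) ∧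
    (∀ b ∈ LinearMap.ker g, ∃ p ∈ LinearMap.ker f, p.2 = b) ∧
    -- second short exact sequence
    (∀ a ∈ LinearMap.ker f₂₃, ((0, a) : A₂ × A₃) ∈ LinearMap.ker f) ∧
    (∀ p ∈ LinearMap.ker f, p.1 ∈ LinearMap.ker g') ∧
    (∀ a ∈ LinearMap.ker f₂₃, ((0, a) : A₂ × A₃) = 0 → a = 0) ∧
    (∀ p ∈ LinearMap.ker f, (p.1 = 0 ↔ ∃ a ∈ LinearMap.ker f₂₃, p = ((0, a) : A₂ × A₃))) ∧
    (∀ b ∈ LinearMap.ker g', ∃ p ∈ LinearMap.ker f, p.1 = b) ∧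
    -- the resulting direct sum decompositions
    Nonempty (↥(LinearMap.ker f) ≃ₗ[ℝ] ↥(LinearMap.ker f₁₂) × ↥(LinearMap.ker g)) ∧
    Nonempty (↥(LinearMap.ker f) ≃ₗ[ℝ] ↥(LinearMap.ker f₂₃) × ↥(LinearMap.ker g')) := by
  obtain ⟨h₁, h₂, h₃, h₄, h₅, e⟩ := Exact.inl_snd.shortExact_restrict inl_injective (ker f)
    (comap_inl_ker hf) (map_snd_ker hf hg)
  obtain ⟨h₆, h₇, h₈, h₉, h₁₀, e'⟩ := Exact.inr_fst.shortExact_restrict inr_injective (ker f)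
    (comap_inr_ker hf) (map_fst_ker hf hg')
  exact ⟨h₁, h₂, h₃, h₄, h₅, h₆, h₇, h₈, h₉, h₁₀, e, e'⟩
end

section
/- Image decomposition for composable Mayer–Vietoris maps. With the maps f₁₂, f₂₃, f, f₍₁₂,₃₎ as in the context, the inclusion (b₁, b₂) ↦ (b₁, b₂, 0) carries im(f₁₂) into im(f), the map Q(b₁, b₂, b₃) = (q₁₂(b₁, b₂), b₃) carries im(f) onto im(f₍₁₂,₃₎), and the resulting sequence 0 → im(f₁₂) → im(f) → im(f₍₁₂,₃₎) → 0 is a short exact sequence; in particular im(f) ≅ im(f₁₂) ⊕ im(f₍₁₂,₃₎). -/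
/-!
With `ι (b₁, b₂) = (b₁, b₂, 0)` and `j (b₂, b₃) = (0, b₂, b₃)`, the map `f` is
`(ι ∘ f₁₂) ⊕ (j ∘ f₂₃)`, the kernel of `Q` is exactly `ι (im f₁₂)`, and `Q ∘ j ∘ f₂₃ = f₍₁₂,₃₎`.
Hence `Q` maps `im f` onto `im f₍₁₂,₃₎` with kernel `im f ∩ ker Q = ι (im f₁₂)`, and this short
exact sequence of vector spaces splits.
-/

open LinearMap Submodule

section Splitting

variable {R M N P : Type*} [Ring R] [AddCommGroup M] [AddCommGroup N] [AddCommGroup P]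
  [Module R M] [Module R N] [Module R P]

theorem Function.Exact.nonempty_linearEquiv_prod_s7 [Module.Projective R P]
    {i : M →ₗ[R] N} {q : N →ₗ[R] P} (h : Function.Exact i q) (hi : Function.Injective i)
    (hq : Function.Surjective q) : Nonempty (N ≃ₗ[R] M × P) :=
  let ⟨s, hs⟩ := q.exists_rightInverse_of_surjective (range_eq_top.2 hq)
  ⟨(h.splitSurjectiveEquiv hi ⟨s, hs⟩).1⟩

theorem Submodule.nonempty_linearEquiv_inf_ker_prod_map (V : Submodule R M) (Q : M →ₗ[R] N)
    [Module.Projective R (V.map Q)] : Nonempty (V ≃ₗ[R] ↥(V ⊓ ker Q) × ↥(V.map Q)) := by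
  refine Function.Exact.nonempty_linearEquiv_prod_s7 (i := inclusion inf_le_left)
    (q := Q.submoduleMap V) ?_ (inclusion_injective _) (Q.submoduleMap_surjective V)
  rintro ⟨x, hx⟩
  simp only [Subtype.ext_iff, submoduleMap_coe_apply, ZeroMemClass.coe_zero, Set.mem_range,
    Subtype.exists, coe_inclusion, mem_inf, mem_ker]
  exact ⟨fun h => ⟨x, ⟨hx, h⟩, rfl⟩, fun ⟨_, ⟨_, h⟩, hy⟩ => hy ▸ h⟩

theorem LinearMap.map_range_coprod_of_comp_eq_zero {A B : Type*} [AddCommGroup A] [Module R A]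
    [AddCommGroup B] [Module R B] {φ : A →ₗ[R] M} (ψ : B →ₗ[R] M) {Q : M →ₗ[R] N}
    (h : Q ∘ₗ φ = 0) : (range (φ.coprod ψ)).map Q = range (Q ∘ₗ ψ) := by
  rw [range_coprod, Submodule.map_sup, ← range_comp, ← range_comp, h, range_zero, bot_sup_eq]

end Splitting

/-- **Image decomposition for composable Mayer–Vietoris maps.**  With
`f(a₂, a₃) = ((f₁₂a₂)₁, (f₁₂a₂)₂ + (f₂₃a₃)₁, (f₂₃a₃)₂)`, `f₍₁₂,₃₎ = g` and
`Q(b₁,b₂,b₃) = (q₁₂(b₁,b₂), b₃)`: the inclusion `(b₁,b₂) ↦ (b₁,b₂,0)` carries `im f₁₂`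
into `im f`, `Q` carries `im f` onto `im f₍₁₂,₃₎`, and
`0 → im f₁₂ → im f → im f₍₁₂,₃₎ → 0` is a short exact sequence; in particular
`im f ≅ im f₁₂ ⊕ im f₍₁₂,₃₎`. -/
theorem mayerVietoris_image_decomposition
    {A₂ A₃ B₁ B₂ B₃ : Type*}
    [AddCommGroup A₂] [Module ℝ A₂] [AddCommGroup A₃] [Module ℝ A₃]
    [AddCommGroup B₁] [Module ℝ B₁] [AddCommGroup B₂] [Module ℝ B₂]
    [AddCommGroup B₃] [Module ℝ B₃]
    (f₁₂ : A₂ →ₗ[ℝ] B₁ × B₂) (f₂₃ : A₃ →ₗ[ℝ] B₂ × B₃)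
    (f : A₂ × A₃ →ₗ[ℝ] B₁ × B₂ × B₃)
    (hf : ∀ p : A₂ × A₃,
      f p = ((f₁₂ p.1).1, ((f₁₂ p.1).2 + (f₂₃ p.2).1, (f₂₃ p.2).2)))
    (g : A₃ →ₗ[ℝ] ((B₁ × B₂) ⧸ LinearMap.range f₁₂) × B₃)
    (hg : ∀ a : A₃,
      g a = (Submodule.mkQ (LinearMap.range f₁₂) (0, (f₂₃ a).1), (f₂₃ a).2))
    (Q : B₁ × B₂ × B₃ →ₗ[ℝ] ((B₁ × B₂) ⧸ LinearMap.range f₁₂) × B₃)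
    (hQ : ∀ b : B₁ × B₂ × B₃,
      Q b = (Submodule.mkQ (LinearMap.range f₁₂) (b.1, b.2.1), b.2.2)) :
    (∀ p ∈ LinearMap.range f₁₂, ((p.1, (p.2, 0)) : B₁ × B₂ × B₃) ∈ LinearMap.range f) ∧
    (∀ w ∈ LinearMap.range f, Q w ∈ LinearMap.range g) ∧
    (∀ v ∈ LinearMap.range g, ∃ w ∈ LinearMap.range f, Q w = v) ∧
    (∀ p ∈ LinearMap.range f₁₂, ((p.1, (p.2, 0)) : B₁ × B₂ × B₃) = 0 → p = 0) ∧
    (∀ w ∈ LinearMap.range f,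
      (Q w = 0 ↔ ∃ p ∈ LinearMap.range f₁₂, w = ((p.1, (p.2, 0)) : B₁ × B₂ × B₃))) ∧
    Nonempty (↥(LinearMap.range f) ≃ₗ[ℝ] ↥(LinearMap.range f₁₂) × ↥(LinearMap.range g)) := by
  let ι : B₁ × B₂ →ₗ[ℝ] B₁ × B₂ × B₃ :=
    (LinearEquiv.prodAssoc ℝ B₁ B₂ B₃).toLinearMap ∘ₗ inl ℝ (B₁ × B₂) B₃
  have hι : Function.Injective ι := fun p p' h => by simpa [ι, Prod.ext_iff] using h
  have hf' : f = (ι ∘ₗ f₁₂).coprod (inr ℝ B₁ (B₂ × B₃) ∘ₗ f₂₃) := by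
    ext p <;> simp [hf, ι]
  have hg' : g = Q ∘ₗ inr ℝ B₁ (B₂ × B₃) ∘ₗ f₂₃ := by
    ext a <;> simp [hg, hQ]
  have hker : ker Q = (range f₁₂).map ι := by
    ext b
    simp only [mem_ker, hQ, Prod.mk_eq_zero, mkQ_apply, Quotient.mk_eq_zero, mem_map]
    constructor
    · rintro ⟨hb, hb₃⟩
      exact ⟨_, hb, Prod.ext rfl (Prod.ext rfl hb₃.symm)⟩
    · rintro ⟨p, hp, rfl⟩
      exact ⟨hp, rfl⟩
  have hle : (range f₁₂).map ι ≤ range f := by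
    rw [hf', range_coprod, range_comp]
    exact le_sup_left
  have hmap : (range f).map Q = range g := by
    rw [hf', hg']
    exact map_range_coprod_of_comp_eq_zero _ (by rw [← range_le_ker_iff, range_comp, hker])
  have hinf : range f ⊓ ker Q = (range f₁₂).map ι := by
    rw [hker, inf_eq_right.2 hle]
  have := Module.Free.of_divisionRing ℝ ((range f).map Q)
  obtain ⟨e⟩ := (range f).nonempty_linearEquiv_inf_ker_prod_map Q
  refine ⟨fun p hp => hle ⟨p, hp, rfl⟩, fun w hw => hmap ▸ mem_map_of_mem hw,
    fun v hv => by rwa [← hmap] at hv, fun p _ h => hι (h.trans (map_zero ι).symm), ?_, ?_⟩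
  · intro w _
    rw [← mem_ker, hker]
    exact exists_congr fun p => and_congr_right' eq_comm
  · exact ⟨e.trans (((LinearEquiv.ofEq _ _ hinf).trans (equivMapOfInjective ι hι _).symm).prodCongr
      (LinearEquiv.ofEq _ _ hmap))⟩
end

section
/- Rank identity for composable Mayer–Vietoris maps. Assume in addition that A₂, A₃, B₁, B₂, B₃ are finite-dimensional. Then, with the maps f₁₂, f₂₃, f, f₍₁₂,₃₎, f₍₁,₂₃₎ as in the context, dim im(f₁₂) + dim im(f₍₁₂,₃₎) = dim im(f) = dim im(f₂₃) + dim im(f₍₁,₂₃₎). -/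
/-!
Let `π : B₁ × B₂ × B₃ → coker f₁₂ × B₃` be the quotient map on the first two coordinates.
Since `f₁₂` dies in its cokernel, `π ∘ f = f₍₁₂,₃₎ ∘ pr₂`, so `π` maps `im f` onto `im f₍₁₂,₃₎`;
its kernel `im f₁₂ × 0` lies inside `im f`, so rank–nullity for `π` on `im f` gives the first
identity. The second one is the mirror image, with `B₁ × coker f₂₃`.
-/

open LinearMap Submodule Module

theorem Submodule.finrank_prod_bot {R M M' : Type*} [Semiring R] [AddCommMonoid M] [Module R M]
    [AddCommMonoid M'] [Module R M'] (p : Submodule R M) :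
    finrank R (p.prod (⊥ : Submodule R M')) = finrank R p := by
  rw [← map_inl]
  exact (equivMapOfInjective _ inl_injective p).finrank_eq.symm

theorem Submodule.finrank_bot_prod {R M M' : Type*} [Semiring R] [AddCommMonoid M] [Module R M]
    [AddCommMonoid M'] [Module R M'] (q : Submodule R M') :
    finrank R ((⊥ : Submodule R M).prod q) = finrank R q := by
  rw [← map_inr]
  exact (equivMapOfInjective _ inr_injective q).finrank_eq.symm

theorem LinearMap.finrank_ker_add_finrank_range_comp {K A V W : Type*} [DivisionRing K]
    [AddCommGroup A] [Module K A] [AddCommGroup V] [Module K V] [AddCommGroup W] [Module K W]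
    [FiniteDimensional K A] (φ : A →ₗ[K] V) (π : V →ₗ[K] W) (h : ker π ≤ range φ) :
    finrank K (ker π) + finrank K (range (π ∘ₗ φ)) = finrank K (range φ) := by
  have rank_nullity := (π.domRestrict (range φ)).finrank_range_add_finrank_ker
  rw [range_domRestrict, ker_domRestrict, ← range_comp,
    (comapSubtypeEquivOfLe h).finrank_eq] at rank_nullity
  omega

section MayerVietoris

variable {K A₂ A₃ B₁ B₂ B₃ : Type*} [DivisionRing K]
  [AddCommGroup A₂] [Module K A₂] [AddCommGroup A₃] [Module K A₃]
  [AddCommGroup B₁] [Module K B₁] [AddCommGroup B₂] [Module K B₂]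
  [AddCommGroup B₃] [Module K B₃]
  [FiniteDimensional K A₂] [FiniteDimensional K A₃]

theorem mayerVietoris_finrank_left
    (f₁₂ : A₂ →ₗ[K] B₁ × B₂) (f₂₃ : A₃ →ₗ[K] B₂ × B₃) (f : A₂ × A₃ →ₗ[K] B₁ × B₂ × B₃)
    (hf : ∀ p : A₂ × A₃, f p = ((f₁₂ p.1).1, ((f₁₂ p.1).2 + (f₂₃ p.2).1, (f₂₃ p.2).2)))
    (g : A₃ →ₗ[K] ((B₁ × B₂) ⧸ range f₁₂) × B₃)
    (hg : ∀ a, g a = ((range f₁₂).mkQ (0, (f₂₃ a).1), (f₂₃ a).2)) :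
    finrank K (range f₁₂) + finrank K (range g) = finrank K (range f) := by
  let e := LinearEquiv.prodAssoc K B₁ B₂ B₃
  let π := ((range f₁₂).mkQ.prodMap (id : B₃ →ₗ[K] B₃)) ∘ₗ e.symm.toLinearMap
  have hker : ker π = ((range f₁₂).prod ⊥).map e.toLinearMap := by
    rw [ker_comp, comap_equiv_eq_map_symm, ker_prodMap, ker_mkQ, ker_id, LinearEquiv.symm_symm]
  have hker_le : ker π ≤ range f := by
    rw [hker]
    rintro _ ⟨⟨b, b₃⟩, ⟨⟨a₂, rfl⟩, rfl : b₃ = 0⟩, rfl⟩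
    exact ⟨(a₂, 0), by simp only [hf, map_zero, Prod.fst_zero, Prod.snd_zero, add_zero]; rfl⟩
  have hcomp : π ∘ₗ f = g ∘ₗ snd K A₂ A₃ := by
    refine LinearMap.ext fun ⟨a₂, a₃⟩ => ?_
    have hmk : (range f₁₂).mkQ (f₁₂ a₂) = 0 := (Quotient.mk_eq_zero _).2 (mem_range_self f₁₂ a₂)
    have hsplit : e.symm (f (a₂, a₃)) = (f₁₂ a₂ + (0, (f₂₃ a₃).1), (f₂₃ a₃).2) := by
      rw [hf, LinearEquiv.symm_apply_eq]
      simp [e]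
    simp only [π, comp_apply, LinearEquiv.coe_coe, hsplit, prodMap_apply, map_add, hmk, zero_add,
      id_apply, snd_apply, hg]
  have key := finrank_ker_add_finrank_range_comp f π hker_le
  rwa [hcomp, range_comp_of_range_eq_top _ (range_snd), hker, LinearEquiv.finrank_map_eq,
    finrank_prod_bot] at key

theorem mayerVietoris_finrank_right
    (f₁₂ : A₂ →ₗ[K] B₁ × B₂) (f₂₃ : A₃ →ₗ[K] B₂ × B₃) (f : A₂ × A₃ →ₗ[K] B₁ × B₂ × B₃)
    (hf : ∀ p : A₂ × A₃, f p = ((f₁₂ p.1).1, ((f₁₂ p.1).2 + (f₂₃ p.2).1, (f₂₃ p.2).2)))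
    (g' : A₂ →ₗ[K] B₁ × ((B₂ × B₃) ⧸ range f₂₃))
    (hg' : ∀ a, g' a = ((f₁₂ a).1, (range f₂₃).mkQ ((f₁₂ a).2, 0))) :
    finrank K (range f₂₃) + finrank K (range g') = finrank K (range f) := by
  let π := (id : B₁ →ₗ[K] B₁).prodMap (range f₂₃).mkQ
  have hker : ker π = (⊥ : Submodule K B₁).prod (range f₂₃) := by
    rw [ker_prodMap, ker_mkQ, ker_id]
  have hker_le : ker π ≤ range f := by
    rw [hker]
    rintro ⟨b₁, _⟩ ⟨rfl : b₁ = 0, a₃, rfl⟩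
    exact ⟨(0, a₃), by simp [hf]⟩
  have hcomp : π ∘ₗ f = g' ∘ₗ fst K A₂ A₃ := by
    refine LinearMap.ext fun ⟨a₂, a₃⟩ => ?_
    have hmk : (range f₂₃).mkQ (f₂₃ a₃) = 0 := (Quotient.mk_eq_zero _).2 (mem_range_self f₂₃ a₃)
    have hsplit : f (a₂, a₃) = ((f₁₂ a₂).1, ((f₁₂ a₂).2, 0) + f₂₃ a₃) := by
      rw [hf]
      ext <;> simp
    simp only [π, comp_apply, hsplit, prodMap_apply, map_add, hmk, add_zero, id_apply, fst_apply,
      hg']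
  have key := finrank_ker_add_finrank_range_comp f π hker_le
  rwa [hcomp, range_comp_of_range_eq_top _ (range_fst), hker, finrank_bot_prod] at key

end MayerVietoris

theorem mayerVietoris_rank_identity_general
    {A₂ A₃ B₁ B₂ B₃ : Type*}
    [AddCommGroup A₂] [Module ℝ A₂] [AddCommGroup A₃] [Module ℝ A₃]
    [AddCommGroup B₁] [Module ℝ B₁] [AddCommGroup B₂] [Module ℝ B₂]
    [AddCommGroup B₃] [Module ℝ B₃]
    [FiniteDimensional ℝ A₂] [FiniteDimensional ℝ A₃]
    (f₁₂ : A₂ →ₗ[ℝ] B₁ × B₂) (f₂₃ : A₃ →ₗ[ℝ] B₂ × B₃)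
    (f : A₂ × A₃ →ₗ[ℝ] B₁ × B₂ × B₃)
    (hf : ∀ p : A₂ × A₃,
      f p = ((f₁₂ p.1).1, ((f₁₂ p.1).2 + (f₂₃ p.2).1, (f₂₃ p.2).2)))
    (g : A₃ →ₗ[ℝ] ((B₁ × B₂) ⧸ LinearMap.range f₁₂) × B₃)
    (hg : ∀ a : A₃,
      g a = (Submodule.mkQ (LinearMap.range f₁₂) (0, (f₂₃ a).1), (f₂₃ a).2))
    (g' : A₂ →ₗ[ℝ] B₁ × ((B₂ × B₃) ⧸ LinearMap.range f₂₃))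
    (hg' : ∀ a : A₂,
      g' a = ((f₁₂ a).1, Submodule.mkQ (LinearMap.range f₂₃) ((f₁₂ a).2, 0))) :
    Module.finrank ℝ ↥(LinearMap.range f₁₂) + Module.finrank ℝ ↥(LinearMap.range g) =
        Module.finrank ℝ ↥(LinearMap.range f) ∧
    Module.finrank ℝ ↥(LinearMap.range f) =
        Module.finrank ℝ ↥(LinearMap.range f₂₃) + Module.finrank ℝ ↥(LinearMap.range g') :=
  ⟨mayerVietoris_finrank_left f₁₂ f₂₃ f hf g hg,
    (mayerVietoris_finrank_right f₁₂ f₂₃ f hf g' hg').symm⟩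

/-- **Rank identity for composable Mayer–Vietoris maps.**  If `A₂, A₃, B₁, B₂, B₃` are
finite-dimensional, then with `f`, `f₍₁₂,₃₎ = g` and `f₍₁,₂₃₎ = g'` as in the paper,
`dim im f₁₂ + dim im f₍₁₂,₃₎ = dim im f = dim im f₂₃ + dim im f₍₁,₂₃₎`. -/
theorem mayerVietoris_rank_identity
    {A₂ A₃ B₁ B₂ B₃ : Type*}
    [AddCommGroup A₂] [Module ℝ A₂] [AddCommGroup A₃] [Module ℝ A₃]
    [AddCommGroup B₁] [Module ℝ B₁] [AddCommGroup B₂] [Module ℝ B₂]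
    [AddCommGroup B₃] [Module ℝ B₃]
    [FiniteDimensional ℝ A₂] [FiniteDimensional ℝ A₃] [FiniteDimensional ℝ B₁]
    [FiniteDimensional ℝ B₂] [FiniteDimensional ℝ B₃]
    (f₁₂ : A₂ →ₗ[ℝ] B₁ × B₂) (f₂₃ : A₃ →ₗ[ℝ] B₂ × B₃)
    (f : A₂ × A₃ →ₗ[ℝ] B₁ × B₂ × B₃)
    (hf : ∀ p : A₂ × A₃,
      f p = ((f₁₂ p.1).1, ((f₁₂ p.1).2 + (f₂₃ p.2).1, (f₂₃ p.2).2)))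
    (g : A₃ →ₗ[ℝ] ((B₁ × B₂) ⧸ LinearMap.range f₁₂) × B₃)
    (hg : ∀ a : A₃,
      g a = (Submodule.mkQ (LinearMap.range f₁₂) (0, (f₂₃ a).1), (f₂₃ a).2))
    (g' : A₂ →ₗ[ℝ] B₁ × ((B₂ × B₃) ⧸ LinearMap.range f₂₃))
    (hg' : ∀ a : A₂,
      g' a = ((f₁₂ a).1, Submodule.mkQ (LinearMap.range f₂₃) ((f₁₂ a).2, 0))) :
    Module.finrank ℝ ↥(LinearMap.range f₁₂) + Module.finrank ℝ ↥(LinearMap.range g) =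
        Module.finrank ℝ ↥(LinearMap.range f) ∧
    Module.finrank ℝ ↥(LinearMap.range f) =
        Module.finrank ℝ ↥(LinearMap.range f₂₃) + Module.finrank ℝ ↥(LinearMap.range g') :=
  mayerVietoris_rank_identity_general f₁₂ f₂₃ f hf g hg g' hg'
end

section
/- The signed hypercube complex is a complex. Let m ≥ 1 and let V = {0,1}^m with the componentwise partial order v ≤ w, and for v ∈ V write |v|₁ = Σᵢ vᵢ. Suppose given abelian groups C_v for v ∈ V and, for every pair v ≤ w in V (including v = w), a group homomorphism m_{vw} : C_v → C_w, such that for every v ≤ w: Σ_{u : v ≤ u ≤ w} (−1)^{|w−u|₁·(|u−v|₁ − 1)} m_{uw} ∘ m_{vu} = 0. Define s(v, w) = (|w−v|₁² − |w−v|₁)/2 + |v|₁, and let 𝝏 be the endomorphism of ⊕_{v ∈ V} C_v whose component C_v → C_w equals (−1)^{s(v,w)} m_{vw} when v ≤ w and is 0 otherwise. Then 𝝏 ∘ 𝝏 = 0. -/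
lemma tri_two (n : ℕ) : 2 * ((n^2 - n)/2) = n^2 - n := by
  refine Nat.mul_div_cancel' ?_
  have h : Even (n^2 - n) :=
    (Nat.even_sub (Nat.le_self_pow two_ne_zero n)).mpr (by simp [Nat.even_pow])
  exact h.two_dvd

lemma tri_add (a b : ℕ) : ((a+b)^2 - (a+b))/2 = (a^2-a)/2 + (b^2-b)/2 + a*b := by
  refine Nat.eq_of_mul_eq_mul_left (show 0 < 2 by norm_num) ?_
  rw [tri_two, Nat.mul_add, Nat.mul_add, tri_two, tri_two]
  have ha : a ≤ a^2 := Nat.le_self_pow two_ne_zero a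
  have hb : b ≤ b^2 := Nat.le_self_pow two_ne_zero b
  have hab : a + b ≤ (a+b)^2 := Nat.le_self_pow two_ne_zero _
  zify [ha, hb, hab]
  ring

lemma zpow_neg_one_int (z : ℤ) : (((-1:ℤˣ)^z : ℤˣ) : ℤ) = (-1:ℤ)^z.natAbs := by
  rcases Int.natAbs_eq z with h | h
  · conv_lhs => rw [h]
    rw [zpow_natCast]; simp
  · conv_lhs => rw [h]
    rw [zpow_neg, zpow_natCast]; simp [inv_pow]

lemma sign_key (A B P : ℕ) :
    (-1:ℤ)^((B^2-B)/2 + (P+A)) * (-1:ℤ)^((A^2-A)/2 + P)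
    = (-1:ℤ)^(((A+B)^2-(A+B))/2 + (A+B)) *
        (((-1:ℤˣ)^((B:ℤ)*((A:ℤ)-1)) : ℤˣ) : ℤ) := by
  rw [zpow_neg_one_int, ← pow_add, ← pow_add]
  rw [neg_one_pow_eq_pow_mod_two (R := ℤ), neg_one_pow_eq_pow_mod_two (R := ℤ)
    (n := ((A+B)^2-(A+B))/2 + (A+B) + ((B:ℤ)*((A:ℤ)-1)).natAbs)]
  congr 1
  have hT := tri_add A B
  rcases Nat.eq_zero_or_pos A with hA | hA
  · subst hA
    have h2 : ((B:ℤ)*(((0:ℕ):ℤ)-1)).natAbs = B := by simp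
    rw [h2]
    set TB := (B^2 - B)/2
    simp only [Nat.zero_add, Nat.add_zero] at *
    omega
  · have h2 : ((B:ℤ)*((A:ℤ)-1)).natAbs = B*(A-1) := by
      rw [show ((A:ℤ)-1) = ((A-1 : ℕ) : ℤ) by omega, ← Nat.cast_mul, Int.natAbs_natCast]
    rw [h2]
    have h3 : B*(A-1) = A*B - B := by
      rcases A with _ | A'
      · omega
      · simp [Nat.succ_sub_one, Nat.succ_mul, Nat.mul_comm]
    have hb : B ≤ A*B := Nat.le_mul_of_pos_left _ hA
    rw [h3]
    set TA := (A^2 - A)/2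
    set TB := (B^2 - B)/2
    set TAB := ((A+B)^2 - (A+B))/2
    set AB := A*B
    omega

/-- **The signed hypercube complex is a complex.**  Given abelian groups `C v` indexed by the
vertices `v ∈ {0,1}^m` of the hypercube and maps `m_{vw} : C v → C w` for `v ≤ w` satisfying
the relation `∑_{v ≤ u ≤ w} (−1)^{|w−u|₁(|u−v|₁−1)} m_{uw} ∘ m_{vu} = 0`, the endomorphism
`𝝏` of `⊕_v C v` with components `(−1)^{s(v,w)} m_{vw}` (where
`s(v,w) = (|w−v|₁² − |w−v|₁)/2 + |v|₁`) satisfies `𝝏 ∘ 𝝏 = 0`. -/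
theorem hypercube_signed_complex_squares_zero
    (m : ℕ) (hm : 1 ≤ m)
    (C : (Fin m → Fin 2) → Type*) [∀ v, AddCommGroup (C v)]
    (M : ∀ v w : Fin m → Fin 2, C v →+ C w)
    (hM : ∀ v w : Fin m → Fin 2, (∀ i, v i ≤ w i) → ∀ x : C v,
      (∑ u ∈ Finset.univ.filter
          (fun u : Fin m → Fin 2 => (∀ i, v i ≤ u i) ∧ ∀ i, u i ≤ w i),
        (((-1 : ℤˣ) ^ ((∑ i, (((w i : ℕ) : ℤ) - ((u i : ℕ) : ℤ))) *
            ((∑ i, (((u i : ℕ) : ℤ) - ((v i : ℕ) : ℤ))) - 1)) : ℤˣ) : ℤ) •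
          (M u w) ((M v u) x)) = 0)
    (D : (∀ v, C v) →+ (∀ v, C v))
    (hD : ∀ (x : ∀ v, C v) (w : Fin m → Fin 2),
      D x w = ∑ v ∈ Finset.univ.filter (fun v : Fin m → Fin 2 => ∀ i, v i ≤ w i),
        ((-1 : ℤ) ^ ((((∑ i, ((w i : ℕ) - (v i : ℕ))) ^ 2 -
              ∑ i, ((w i : ℕ) - (v i : ℕ))) / 2) + ∑ i, (v i : ℕ))) •
          (M v w) (x v)) :
    ∀ x : ∀ v, C v, D (D x) = 0 := by
  intro x
  funext w
  rw [hD]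
  simp only [hD, map_sum, map_zsmul, Finset.smul_sum, smul_smul, Pi.zero_apply]
  -- exponent abbreviation
  -- goal: ∑ u in F w, ∑ v in F u, (e u w * e v u) • M u w (M v u (x v)) = 0
  have step1 : ∀ u : Fin m → Fin 2,
      (∑ v ∈ Finset.univ.filter (fun v : Fin m → Fin 2 => ∀ i, v i ≤ u i),
        ((-1 : ℤ) ^ ((((∑ i, ((w i : ℕ) - (u i : ℕ))) ^ 2 -
              ∑ i, ((w i : ℕ) - (u i : ℕ))) / 2) + ∑ i, (u i : ℕ)) *
         (-1 : ℤ) ^ ((((∑ i, ((u i : ℕ) - (v i : ℕ))) ^ 2 -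
              ∑ i, ((u i : ℕ) - (v i : ℕ))) / 2) + ∑ i, (v i : ℕ))) •
          (M u w) ((M v u) (x v)))
      = ∑ v : Fin m → Fin 2,
          (if (∀ i, v i ≤ u i) then
            ((-1 : ℤ) ^ ((((∑ i, ((w i : ℕ) - (u i : ℕ))) ^ 2 -
                  ∑ i, ((w i : ℕ) - (u i : ℕ))) / 2) + ∑ i, (u i : ℕ)) *
             (-1 : ℤ) ^ ((((∑ i, ((u i : ℕ) - (v i : ℕ))) ^ 2 -
                  ∑ i, ((u i : ℕ) - (v i : ℕ))) / 2) + ∑ i, (v i : ℕ))) •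
              (M u w) ((M v u) (x v)) else 0) := by
    intro u; rw [Finset.sum_filter]
  rw [Finset.sum_congr rfl (fun u _ => step1 u), Finset.sum_filter]
  rw [show (∑ u : Fin m → Fin 2, if (∀ i, u i ≤ w i) then
        ∑ v : Fin m → Fin 2,
          (if (∀ i, v i ≤ u i) then
            ((-1 : ℤ) ^ ((((∑ i, ((w i : ℕ) - (u i : ℕ))) ^ 2 -
                  ∑ i, ((w i : ℕ) - (u i : ℕ))) / 2) + ∑ i, (u i : ℕ)) *
             (-1 : ℤ) ^ ((((∑ i, ((u i : ℕ) - (v i : ℕ))) ^ 2 -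
                  ∑ i, ((u i : ℕ) - (v i : ℕ))) / 2) + ∑ i, (v i : ℕ))) •
              (M u w) ((M v u) (x v)) else 0) else 0)
      = ∑ u : Fin m → Fin 2, ∑ v : Fin m → Fin 2,
          (if ((∀ i, v i ≤ u i) ∧ (∀ i, u i ≤ w i)) then
            ((-1 : ℤ) ^ ((((∑ i, ((w i : ℕ) - (u i : ℕ))) ^ 2 -
                  ∑ i, ((w i : ℕ) - (u i : ℕ))) / 2) + ∑ i, (u i : ℕ)) *
             (-1 : ℤ) ^ ((((∑ i, ((u i : ℕ) - (v i : ℕ))) ^ 2 -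
                  ∑ i, ((u i : ℕ) - (v i : ℕ))) / 2) + ∑ i, (v i : ℕ))) •
              (M u w) ((M v u) (x v)) else 0)
    from Finset.sum_congr rfl (fun u _ => by
      split_ifs with h
      · exact Finset.sum_congr rfl (fun v _ => by simp [h])
      · exact (Finset.sum_eq_zero (fun v _ => by simp [h])).symm)]
  rw [Finset.sum_comm]
  refine Finset.sum_eq_zero (fun v _ => ?_)
  by_cases hvw : ∀ i, v i ≤ w i
  · rw [← Finset.sum_filter]
    have h0 := hM v w hvw (x v)
    have key :
        (∑ u ∈ Finset.univ.filter
            (fun u : Fin m → Fin 2 => (∀ i, v i ≤ u i) ∧ ∀ i, u i ≤ w i),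
          ((-1 : ℤ) ^ ((((∑ i, ((w i : ℕ) - (u i : ℕ))) ^ 2 -
                ∑ i, ((w i : ℕ) - (u i : ℕ))) / 2) + ∑ i, (u i : ℕ)) *
           (-1 : ℤ) ^ ((((∑ i, ((u i : ℕ) - (v i : ℕ))) ^ 2 -
                ∑ i, ((u i : ℕ) - (v i : ℕ))) / 2) + ∑ i, (v i : ℕ))) •
            (M u w) ((M v u) (x v)))
        = ((-1 : ℤ) ^ ((((∑ i, ((w i : ℕ) - (v i : ℕ))) ^ 2 -
              ∑ i, ((w i : ℕ) - (v i : ℕ))) / 2) + ∑ i, ((w i : ℕ) - (v i : ℕ)))) •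
          (∑ u ∈ Finset.univ.filter
              (fun u : Fin m → Fin 2 => (∀ i, v i ≤ u i) ∧ ∀ i, u i ≤ w i),
            (((-1 : ℤˣ) ^ ((∑ i, (((w i : ℕ) : ℤ) - ((u i : ℕ) : ℤ))) *
                ((∑ i, (((u i : ℕ) : ℤ) - ((v i : ℕ) : ℤ))) - 1)) : ℤˣ) : ℤ) •
              (M u w) ((M v u) (x v))) := by
      rw [Finset.smul_sum]
      refine Finset.sum_congr rfl (fun u hu => ?_)
      obtain ⟨-, huv, huw⟩ := Finset.mem_filter.mp hu
      rw [smul_smul]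
      congr 1
      have hN : (∑ i, ((w i : ℕ) - (v i : ℕ)))
          = (∑ i, ((u i : ℕ) - (v i : ℕ))) + (∑ i, ((w i : ℕ) - (u i : ℕ))) := by
        rw [← Finset.sum_add_distrib]
        refine Finset.sum_congr rfl (fun i _ => ?_)
        have h1 : (v i : ℕ) ≤ (u i : ℕ) := huv i
        have h2 : (u i : ℕ) ≤ (w i : ℕ) := huw i
        omega
      have hU : (∑ i, (u i : ℕ))
          = (∑ i, (v i : ℕ)) + (∑ i, ((u i : ℕ) - (v i : ℕ))) := by
        rw [← Finset.sum_add_distrib]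
        refine Finset.sum_congr rfl (fun i _ => ?_)
        have h1 : (v i : ℕ) ≤ (u i : ℕ) := huv i
        omega
      have hZ1 : (∑ i, (((w i : ℕ) : ℤ) - ((u i : ℕ) : ℤ)))
          = ((∑ i, ((w i : ℕ) - (u i : ℕ)) : ℕ) : ℤ) := by
        rw [Nat.cast_sum]
        exact Finset.sum_congr rfl (fun i _ => (Nat.cast_sub (huw i)).symm)
      have hZ2 : (∑ i, (((u i : ℕ) : ℤ) - ((v i : ℕ) : ℤ)))
          = ((∑ i, ((u i : ℕ) - (v i : ℕ)) : ℕ) : ℤ) := by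
        rw [Nat.cast_sum]
        exact Finset.sum_congr rfl (fun i _ => (Nat.cast_sub (huv i)).symm)
      rw [hN, hU, hZ1, hZ2]
      exact sign_key _ _ _
    rw [key, h0, smul_zero]
  · exact Finset.sum_eq_zero (fun u _ =>
      if_neg (fun h => hvw (fun i => le_trans (h.1 i) (h.2 i))))
end

section
/- Pairs in SU(2) with commutator −I. If A, B ∈ SU(2) satisfy A B A⁻¹ B⁻¹ = −I, then tr(A) = tr(B) = 0 and A B = −B A. Moreover, any two such pairs are simultaneously conjugate: if (A, B) and (A', B') both satisfy this relation, then there exists U ∈ SU(2) with A' = U A U⁻¹ and B' = U B U⁻¹. Finally, the only elements of SU(2) commuting with both A and B are I and −I. -/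
/-- `SU(2)`: the subgroup of the unitary group `U(2)` of 2×2 complex matrices
consisting of those of determinant 1. -/
def SU2 : Subgroup (Matrix.unitaryGroup (Fin 2) ℂ) where
  carrier := {A | (A : Matrix (Fin 2) (Fin 2) ℂ).det = 1}
  mul_mem' := by
    intro a b ha hb
    simp only [Set.mem_setOf_eq] at *
    simp [Matrix.UnitaryGroup.mul_val, Matrix.det_mul, ha, hb]
  one_mem' := by simp [Set.mem_setOf_eq]
  inv_mem' := by
    intro a ha
    simp only [Set.mem_setOf_eq] at *
    rw [Matrix.UnitaryGroup.inv_val, Matrix.star_eq_conjTranspose,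
      Matrix.det_conjTranspose, ha]
    simp

/-- The underlying matrix of an element of `SU(2)`. -/
def su2Mat (A : SU2) : Matrix (Fin 2) (Fin 2) ℂ :=
  ((A : Matrix.unitaryGroup (Fin 2) ℂ) : Matrix (Fin 2) (Fin 2) ℂ)

/-! The relation reads `A B = -B A`, so conjugation by `B` negates `A` and `tr A = 0`; symmetrically
`tr B = 0`. A traceless element of SU(2) has eigenvalue `i`, and the element of SU(2) whose first row
is a unit left eigenvector conjugates it to `quatI = diag(i, -i)`. Anticommuting with `quatI` forces
the conjugate of `B` to be `[[0, q], [-q̄, 0]]` with `|q| = 1`, and conjugating by `diag(u, ū)` with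
`u² = q̄` fixes `quatI` and turns it into `quatJ = [[0, 1], [-1, 0]]`. So every such pair is
simultaneously conjugate to `(quatI, quatJ)`, and an element commuting with `A` and `B` is conjugate
to a matrix commuting with `quatI` and `quatJ`: a scalar of determinant 1, that is `±I`. -/

open Matrix Complex ComplexConjugate
open scoped commutatorElement

lemma Matrix.trace_eq_zero_of_mul_eq_neg_mul {n R : Type*} [Fintype n] [DecidableEq n]
    [CommRing R] [NoZeroDivisors R] [CharZero R] {A B : Matrix n n R} (hB : IsUnit B)
    (h : A * B = -(B * A)) : A.trace = 0 := by
  obtain ⟨B, rfl⟩ := hB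
  have : A.trace = -A.trace := calc
    A.trace = (A * B * ↑B⁻¹ : Matrix n n R).trace := by rw [mul_assoc, Units.mul_inv, mul_one]
    _ = -A.trace := by rw [h, neg_mul, trace_neg, trace_mul_cycle, Units.inv_mul, one_mul]
  exact add_self_eq_zero.mp (by linear_combination this)

lemma MonoidHom.map_mul_eq_neg_of_map_commutatorElement {G R : Type*} [Group G] [Ring R]
    (f : G →* R) {a b : G} (h : f ⁅a, b⁆ = -1) : f a * f b = -(f b * f a) := by
  have : a * b = ⁅a, b⁆ * (b * a) := by rw [commutatorElement_def]; group
  rw [← map_mul, ← map_mul, this, map_mul, h, neg_one_mul]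

lemma eq_conj_of_conj_eq_conj {G : Type*} [Group G] {a b u v : G}
    (h : v * b * v⁻¹ = u * a * u⁻¹) : b = v⁻¹ * u * a * (v⁻¹ * u)⁻¹ := calc
  b = v⁻¹ * (v * b * v⁻¹) * v := by group
  _ = v⁻¹ * u * a * (v⁻¹ * u)⁻¹ := by rw [h]; group

lemma Matrix.exists_normSq_add_normSq_eq_one_and_vecMul_eq_zero {M : Matrix (Fin 2) (Fin 2) ℂ}
    (h : M.det = 0) : ∃ u v : ℂ, normSq u + normSq v = 1 ∧ ![u, v] ᵥ* M = 0 := by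
  obtain ⟨w, hw, hwM⟩ := exists_vecMul_eq_zero_iff.mpr h
  set r := normSq (w 0) + normSq (w 1) with hr_def
  have hr : 0 < r := by
    by_contra! hr
    refine hw (funext fun i ↦ ?_)
    fin_cases i <;> simp only [Fin.zero_eta, Fin.mk_one, Pi.zero_apply, ← normSq_eq_zero] <;>
      linarith [normSq_nonneg (w 0), normSq_nonneg (w 1)]
  refine ⟨((√r)⁻¹ : ℝ) * w 0, ((√r)⁻¹ : ℝ) * w 1, ?_, ?_⟩
  · simp only [normSq_mul, normSq_ofReal, ← mul_add, ← hr_def]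
    field_simp
    rw [Real.sq_sqrt hr.le]
  · have : ![((√r)⁻¹ : ℝ) * w 0, ((√r)⁻¹ : ℝ) * w 1] = (((√r)⁻¹ : ℝ) : ℂ) • w := by
      ext i; fin_cases i <;> rfl
    rw [this, smul_vecMul, hwM, smul_zero]

namespace SU2

def su2MatHom : SU2 →* Matrix (Fin 2) (Fin 2) ℂ :=
  (unitary (Matrix (Fin 2) (Fin 2) ℂ)).subtype.comp SU2.subtype

@[simp] lemma su2MatHom_apply (A : SU2) : su2MatHom A = su2Mat A := rfl

lemma su2Mat_mul (A B : SU2) : su2Mat (A * B) = su2Mat A * su2Mat B := rfl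

lemma su2Mat_injective : Function.Injective su2Mat :=
  fun _ _ h ↦ Subtype.ext (Subtype.ext h)

lemma star_su2Mat_mul (A : SU2) : star (su2Mat A) * su2Mat A = 1 :=
  (A : unitaryGroup (Fin 2) ℂ).2.1

lemma su2Mat_mul_star (A : SU2) : su2Mat A * star (su2Mat A) = 1 :=
  (A : unitaryGroup (Fin 2) ℂ).2.2

lemma det_su2Mat (A : SU2) : (su2Mat A).det = 1 := A.2

lemma su2Mat_conj (U A : SU2) :
    su2Mat (U * A * U⁻¹) = su2Mat U * su2Mat A * star (su2Mat U) := rfl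

lemma isUnit_su2Mat (A : SU2) : IsUnit (su2Mat A) := (Group.isUnit A).map su2MatHom

lemma star_su2Mat_eq_adjugate (A : SU2) : star (su2Mat A) = adjugate (su2Mat A) := by
  rw [← inv_eq_left_inv (star_su2Mat_mul A), Matrix.inv_def, det_su2Mat, Ring.inverse_one,
    one_smul]

lemma su2Mat_apply_one_one (A : SU2) : su2Mat A 1 1 = conj (su2Mat A 0 0) := by
  simpa [adjugate_fin_two] using (congrFun (congrFun (star_su2Mat_eq_adjugate A) 0) 0).symm

lemma su2Mat_apply_one_zero (A : SU2) : su2Mat A 1 0 = -conj (su2Mat A 0 1) := by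
  simpa [adjugate_fin_two, neg_eq_iff_eq_neg] using
    (congrFun (congrFun (star_su2Mat_eq_adjugate A) 1) 0).symm

lemma su2Mat_eq (A : SU2) :
    su2Mat A = !![su2Mat A 0 0, su2Mat A 0 1; -conj (su2Mat A 0 1), conj (su2Mat A 0 0)] := by
  rw [← su2Mat_apply_one_one, ← su2Mat_apply_one_zero]
  exact eta_fin_two _

lemma normSq_add_normSq (A : SU2) : normSq (su2Mat A 0 0) + normSq (su2Mat A 0 1) = 1 := by
  have h := det_su2Mat A
  rw [det_fin_two, su2Mat_apply_one_one, su2Mat_apply_one_zero] at h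
  rw [← ofReal_inj]
  push_cast
  rw [← mul_conj, ← mul_conj]
  linear_combination h

def mk (u v : ℂ) (h : normSq u + normSq v = 1) : SU2 :=
  ⟨⟨!![u, v; -conj v, conj u], by
    have hc : u * conj u + v * conj v = 1 := by rw [mul_conj, mul_conj]; exact_mod_cast h
    rw [mem_unitaryGroup_iff, star_eq_conjTranspose]
    ext i j
    fin_cases i <;> fin_cases j <;> simp [mul_apply] <;> first | ring1 | linear_combination hc⟩, by
    show det !![u, v; -conj v, conj u] = 1
    rw [det_fin_two_of, mul_neg, sub_neg_eq_add, mul_conj, mul_conj]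
    exact_mod_cast h⟩

lemma su2Mat_mk (u v : ℂ) (h : normSq u + normSq v = 1) :
    su2Mat (mk u v h) = !![u, v; -conj v, conj u] := rfl

lemma exists_mul_eq_diag_mul {A : SU2} {μ : ℂ} (h : (su2Mat A - μ • 1).det = 0) :
    ∃ U : SU2, su2Mat U * su2Mat A = !![μ, 0; 0, conj μ] * su2Mat U := by
  obtain ⟨a, b, hA⟩ : ∃ a b, su2Mat A = !![a, b; -conj b, conj a] := ⟨_, _, su2Mat_eq A⟩
  obtain ⟨u, v, huv, hker⟩ := exists_normSq_add_normSq_eq_one_and_vecMul_eq_zero h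
  rw [hA] at hker
  have h0 : u * (a - μ) - v * conj b = 0 := by
    simpa [vecMul, dotProduct, sub_eq_add_neg] using congrFun hker 0
  have h1 : u * b + v * (conj a - μ) = 0 := by
    simpa [vecMul, dotProduct, sub_eq_add_neg] using congrFun hker 1
  have h0' : conj u * (conj a - conj μ) - conj v * b = 0 := by simpa using congrArg conj h0
  have h1' : conj u * conj b + conj v * (a - conj μ) = 0 := by simpa using congrArg conj h1
  -- the second row `(-v̄, ū)` of `mk u v` is then a left eigenvector for `μ̄`, by `h0'` and `h1'`
  refine ⟨mk u v huv, ?_⟩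
  rw [su2Mat_mk, hA, mul_fin_two, mul_fin_two]
  congrm !![?_, ?_; ?_, ?_]
  · linear_combination h0
  · linear_combination h1
  · linear_combination -h1'
  · linear_combination h0'

def quatI : SU2 := mk I 0 (by simp)

def quatJ : SU2 := mk 0 1 (by simp)

lemma exists_conj_eq_quatI {A : SU2} (hA : (su2Mat A).trace = 0) :
    ∃ U : SU2, U * A * U⁻¹ = quatI := by
  have h : (su2Mat A - I • 1).det = 0 := by
    have hd := det_su2Mat A
    rw [trace_fin_two] at hA
    rw [det_fin_two] at hd ⊢
    simp only [Matrix.sub_apply, Matrix.smul_apply, one_apply_eq, one_apply_ne, smul_eq_mul,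
      mul_one, mul_zero, sub_zero, ne_eq, zero_ne_one, one_ne_zero, not_false_eq_true]
    linear_combination hd - I * hA + I_sq
  obtain ⟨U, hU⟩ := exists_mul_eq_diag_mul h
  refine ⟨U, mul_inv_eq_of_eq_mul (su2Mat_injective ?_)⟩
  rw [su2Mat_mul, su2Mat_mul, hU, quatI, su2Mat_mk, map_zero, neg_zero, conj_I]

lemma exists_commute_quatI_conj_eq_quatJ {B : SU2} (hB : su2Mat B 0 0 = 0) :
    ∃ W : SU2, Commute W quatI ∧ W * B * W⁻¹ = quatJ := by
  set q := su2Mat B 0 1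
  have hBq : su2Mat B = !![0, q; -conj q, 0] := by simpa [hB] using su2Mat_eq B
  have hq : normSq q = 1 := by simpa [hB] using normSq_add_normSq B
  obtain ⟨u, hu⟩ := IsAlgClosed.exists_eq_mul_self (conj q)
  have hu1 : normSq u = 1 := by
    have : normSq u * normSq u = 1 := by rw [← normSq_mul, ← hu, normSq_conj, hq]
    nlinarith [normSq_nonneg u]
  have huu : u * conj u = 1 := by rw [mul_conj, hu1, ofReal_one]
  have hq' : q = conj u * conj u := by simpa using congrArg conj hu
  have huq : u * q = conj u := by linear_combination u * hq' + conj u * huu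
  have huq' : conj u * conj q = u := by simpa using congrArg conj huq
  refine ⟨mk u 0 (by simpa using hu1), su2Mat_injective ?_,
    mul_inv_eq_of_eq_mul (su2Mat_injective ?_)⟩
  · rw [su2Mat_mul, su2Mat_mul, quatI, su2Mat_mk, su2Mat_mk, mul_fin_two, mul_fin_two]
    simp only [map_zero, neg_zero]
    congrm !![?_, ?_; ?_, ?_] <;> ring
  · rw [su2Mat_mul, su2Mat_mul, hBq, quatJ, su2Mat_mk, su2Mat_mk, mul_fin_two, mul_fin_two]
    simp only [map_zero, map_one, neg_zero]
    congrm !![?_, ?_; ?_, ?_]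
    · ring
    · linear_combination huq
    · linear_combination -huq'
    · ring

lemma su2Mat_mul_eq_neg_mul {A B : SU2} (h : su2Mat ⁅A, B⁆ = -1) :
    su2Mat A * su2Mat B = -(su2Mat B * su2Mat A) :=
  su2MatHom.map_mul_eq_neg_of_map_commutatorElement h

lemma su2Mat_conj_commutatorElement (U : SU2) {A B : SU2} (h : su2Mat ⁅A, B⁆ = -1) :
    su2Mat ⁅U * A * U⁻¹, U * B * U⁻¹⁆ = -1 := by
  rw [← MulAut.conj_apply, ← MulAut.conj_apply, ← map_commutatorElement, MulAut.conj_apply,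
    su2Mat_conj, h, mul_neg_one, neg_mul, su2Mat_mul_star]

lemma su2Mat_apply_zero_zero_eq_zero {B : SU2} (h : su2Mat ⁅quatI, B⁆ = -1) :
    su2Mat B 0 0 = 0 := by
  have hanti : I * su2Mat B 0 0 = -(su2Mat B 0 0 * I) := by
    simpa [quatI, su2Mat_mk, mul_apply] using congrFun (congrFun (su2Mat_mul_eq_neg_mul h) 0) 0
  have : 2 * I * su2Mat B 0 0 = 0 := by linear_combination hanti
  simpa [I_ne_zero] using this

theorem exists_conj_eq_quatI_and_conj_eq_quatJ {A B : SU2} (h : su2Mat ⁅A, B⁆ = -1) :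
    ∃ U : SU2, U * A * U⁻¹ = quatI ∧ U * B * U⁻¹ = quatJ := by
  have hA : (su2Mat A).trace = 0 :=
    trace_eq_zero_of_mul_eq_neg_mul (isUnit_su2Mat B) (su2Mat_mul_eq_neg_mul h)
  obtain ⟨U, hU⟩ := exists_conj_eq_quatI hA
  obtain ⟨W, hWI, hWB⟩ := exists_commute_quatI_conj_eq_quatJ
    (su2Mat_apply_zero_zero_eq_zero (hU ▸ su2Mat_conj_commutatorElement U h))
  have hconj (X : SU2) : W * U * X * (W * U)⁻¹ = W * (U * X * U⁻¹) * W⁻¹ := by group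
  exact ⟨W * U, by rw [hconj, hU, hWI.eq, mul_inv_cancel_right], by rw [hconj, hWB]⟩

lemma eq_smul_one_of_commute_quatI_of_commute_quatJ {M : Matrix (Fin 2) (Fin 2) ℂ}
    (hI : Commute M (su2Mat quatI)) (hJ : Commute M (su2Mat quatJ)) : M = M 0 0 • 1 := by
  have hI01 : -(M 0 1 * I) = I * M 0 1 := by
    simpa [quatI, su2Mat_mk, mul_apply] using congrFun (congrFun hI.eq 0) 1
  have hI10 : M 1 0 * I = -(I * M 1 0) := by
    simpa [quatI, su2Mat_mk, mul_apply] using congrFun (congrFun hI.eq 1) 0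
  have hJ01 : M 0 0 = M 1 1 := by
    simpa [quatJ, su2Mat_mk, mul_apply] using congrFun (congrFun hJ.eq 0) 1
  have h01 : 2 * I * M 0 1 = 0 := by linear_combination -hI01
  have h10 : 2 * I * M 1 0 = 0 := by linear_combination hI10
  simp only [mul_eq_zero, two_ne_zero, I_ne_zero, false_or] at h01 h10
  ext i j
  fin_cases i <;> fin_cases j <;> simp [h01, h10, hJ01]

lemma su2Mat_eq_smul_one_of_conj {U C : SU2} {c : ℂ} (h : su2Mat (U * C * U⁻¹) = c • 1) :
    su2Mat C = c • 1 := calc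
  su2Mat C = su2Mat (U⁻¹ * (U * C * U⁻¹) * U) := by group
  _ = star (su2Mat U) * (c • 1) * su2Mat U := by rw [su2Mat_mul, su2Mat_mul, h]; rfl
  _ = c • 1 := by rw [mul_smul_one, smul_mul, star_su2Mat_mul]

lemma su2Mat_eq_one_or_neg_one_of_eq_smul_one {C : SU2} {c : ℂ} (h : su2Mat C = c • 1) :
    su2Mat C = 1 ∨ su2Mat C = -1 := by
  have hc : c ^ 2 = 1 := by simpa [h] using det_su2Mat C
  rcases sq_eq_one_iff.mp hc with rfl | rfl
  · exact .inl (by rw [h, one_smul])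
  · exact .inr (by rw [h, neg_one_smul])

theorem su2Mat_eq_one_or_neg_one_of_commute {A B C : SU2} (h : su2Mat ⁅A, B⁆ = -1)
    (hA : Commute C A) (hB : Commute C B) : su2Mat C = 1 ∨ su2Mat C = -1 := by
  obtain ⟨U, hUA, hUB⟩ := exists_conj_eq_quatI_and_conj_eq_quatJ h
  have hI := (hA.map (MulAut.conj U)).map su2MatHom
  have hJ := (hB.map (MulAut.conj U)).map su2MatHom
  simp only [MulAut.conj_apply, su2MatHom_apply, hUA, hUB] at hI hJ
  exact su2Mat_eq_one_or_neg_one_of_eq_smul_one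
    (su2Mat_eq_smul_one_of_conj (eq_smul_one_of_commute_quatI_of_commute_quatJ hI hJ))

end SU2

/-- **Pairs in SU(2) with commutator `−I`.**  If `A B A⁻¹ B⁻¹ = −I` then
`tr A = tr B = 0` and `A B = −B A`; any two pairs with this property are simultaneously
conjugate in `SU(2)`; and only `±I` commute with both `A` and `B`. -/
theorem su2_commutator_neg_one :
    (∀ A B : SU2, su2Mat (A * B * A⁻¹ * B⁻¹) = -1 →
      (su2Mat A).trace = 0 ∧ (su2Mat B).trace = 0 ∧
        su2Mat A * su2Mat B = -(su2Mat B * su2Mat A)) ∧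
    (∀ A B A' B' : SU2, su2Mat (A * B * A⁻¹ * B⁻¹) = -1 →
      su2Mat (A' * B' * A'⁻¹ * B'⁻¹) = -1 →
      ∃ U : SU2, A' = U * A * U⁻¹ ∧ B' = U * B * U⁻¹) ∧
    (∀ A B : SU2, su2Mat (A * B * A⁻¹ * B⁻¹) = -1 →
      ∀ C : SU2, C * A = A * C → C * B = B * C → su2Mat C = 1 ∨ su2Mat C = -1) := by
  refine ⟨fun A B h ↦ ?_, fun A B A' B' h h' ↦ ?_,
    fun A B h C ↦ SU2.su2Mat_eq_one_or_neg_one_of_commute h⟩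
  · have hAB := SU2.su2Mat_mul_eq_neg_mul h
    have hBA : su2Mat B * su2Mat A = -(su2Mat A * su2Mat B) := by rw [hAB, neg_neg]
    exact ⟨trace_eq_zero_of_mul_eq_neg_mul (SU2.isUnit_su2Mat B) hAB,
      trace_eq_zero_of_mul_eq_neg_mul (SU2.isUnit_su2Mat A) hBA, hAB⟩
  · obtain ⟨U, hUA, hUB⟩ := SU2.exists_conj_eq_quatI_and_conj_eq_quatJ h
    obtain ⟨V, hVA, hVB⟩ := SU2.exists_conj_eq_quatI_and_conj_eq_quatJ h'
    exact ⟨V⁻¹ * U, eq_conj_of_conj_eq_conj (hVA.trans hUA.symm),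
      eq_conj_of_conj_eq_conj (hVB.trans hUB.symm)⟩
end

section
/- Representation count behind I(𝕋³). Let Γ = ℤ × F₂, where F₂ is the free group on two generators x and y. Consider group homomorphisms ρ : Γ → SU(2) satisfying ρ(0, x y x⁻¹ y⁻¹) = −I. Call two such homomorphisms ρ, ρ' conjugate if there exists U ∈ SU(2) with ρ'(g) = U ρ(g) U⁻¹ for all g ∈ Γ. Then such homomorphisms exist, every such ρ has the property that only ±I commute with all elements of its image, and the set of such homomorphisms has exactly two conjugacy classes, distinguished by whether ρ(1, e) = I or ρ(1, e) = −I (where (1, e) is the generator of the ℤ factor). -/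
/-- The group `Γ = ℤ × F₂`, with `F₂` the free group on two generators. -/
abbrev GammaGroup : Type := Multiplicative ℤ × FreeGroup (Fin 2)

/-- The element `(0, x y x⁻¹ y⁻¹)` of `Γ = ℤ × F₂`. -/
def gammaCommutator : GammaGroup :=
  (1, FreeGroup.of 0 * FreeGroup.of 1 * (FreeGroup.of 0)⁻¹ * (FreeGroup.of 1)⁻¹)

/-- The generator `(1, e)` of the `ℤ`-factor of `Γ = ℤ × F₂`. -/
def gammaZGen : GammaGroup := (Multiplicative.ofAdd (1 : ℤ), 1)

/-- `ρ : Γ → SU(2)` sends the commutator `(0, x y x⁻¹ y⁻¹)` to `−I`. -/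
def SendsCommutatorToNegOne (ρ : GammaGroup →* SU2) : Prop :=
  su2Mat (ρ gammaCommutator) = -1


open Matrix Complex


open Matrix Complex

noncomputable section

/-- The standard `SU(2)`-form matrix. -/
def mC (a b : ℂ) : Matrix (Fin 2) (Fin 2) ℂ := !![a, b; -(star b), star a]

lemma mC_mul (a b c d : ℂ) :
    mC a b * mC c d = mC (a*c - b*star d) (a*d + b*star c) := by
  ext i j
  fin_cases i <;> fin_cases j <;>
    simp [mC, Matrix.mul_apply, Fin.sum_univ_two, Complex.star_def, _root_.map_add, _root_.map_mul,
      _root_.map_sub, RingHom.map_neg] <;> ring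

lemma mC_star (a b : ℂ) : star (mC a b) = mC (star a) (-b) := by
  ext i j
  fin_cases i <;> fin_cases j <;>
    simp [mC, star_eq_conjTranspose, conjTranspose_apply, Complex.star_def]

lemma mC_neg (a b : ℂ) : -(mC a b) = mC (-a) (-b) := by
  ext i j
  fin_cases i <;> fin_cases j <;> simp [mC, Complex.star_def]

lemma mC_inj {a b c d : ℂ} (h : mC a b = mC c d) : a = c ∧ b = d := by
  constructor
  · have := congrFun (congrFun h 0) 0; simpa [mC] using this
  · have := congrFun (congrFun h 0) 1; simpa [mC] using this

lemma mC_one : mC 1 0 = 1 := by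
  ext i j
  fin_cases i <;> fin_cases j <;> simp [mC, Matrix.one_apply]

lemma mC_negone : mC (-1) 0 = -1 := by
  ext i j
  fin_cases i <;> fin_cases j <;> simp [mC, Matrix.one_apply]

lemma mC_det (a b : ℂ) : (mC a b).det = a * star a + b * star b := by
  simp [mC, Matrix.det_fin_two]

lemma mC_trace (a b : ℂ) : (mC a b).trace = a + star a := by
  simp [mC, Matrix.trace_fin_two]

lemma mC_star_mul_self {a b : ℂ} (h : a * star a + b * star b = 1) :
    star (mC a b) * mC a b = 1 := by
  rw [mC_star, mC_mul]
  have h1 : star a * a - -b * star b = 1 := by rw [← h]; ring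
  have h2 : star a * b + -b * star a = 0 := by ring
  rw [h1, h2, mC_one]

lemma mC_mul_star_self {a b : ℂ} (h : a * star a + b * star b = 1) :
    mC a b * star (mC a b) = 1 := by
  rw [mC_star, mC_mul]
  have h1 : a * star a - b * star (-b) = 1 := by rw [← h, star_neg]; ring
  have h2 : a * -b + b * star (star a) = 0 := by rw [star_star]; ring
  rw [h1, h2, mC_one]

end

noncomputable section

/-- Build an element of `SU2` from the pair `(a, b)`. -/
def mkSU (a b : ℂ) (h : a * star a + b * star b = 1) : SU2 :=
  ⟨⟨mC a b, by
      rw [Matrix.mem_unitaryGroup_iff]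
      exact mC_mul_star_self h⟩, by
    show (mC a b).det = 1
    rw [mC_det, h]⟩

@[simp] lemma su2Mat_mkSU (a b : ℂ) (h) : su2Mat (mkSU a b h) = mC a b := rfl

lemma SU2.ext' {A B : SU2} (h : su2Mat A = su2Mat B) : A = B := by
  apply Subtype.ext; apply Subtype.ext; exact h

@[simp] lemma su2Mat_mul (A B : SU2) : su2Mat (A * B) = su2Mat A * su2Mat B := rfl

@[simp] lemma su2Mat_one : su2Mat (1 : SU2) = 1 := rfl

@[simp] lemma su2Mat_inv (A : SU2) : su2Mat A⁻¹ = star (su2Mat A) := rfl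

/-- Every element of `SU2` has the standard form. -/
lemma SU2.exists_form (A : SU2) :
    ∃ a b : ℂ, ∃ h : a * star a + b * star b = 1, A = mkSU a b h := by
  set M := su2Mat A with hM
  have hdet : M.det = 1 := A.2
  have huni : M ∈ Matrix.unitaryGroup (Fin 2) ℂ := (A : Matrix.unitaryGroup (Fin 2) ℂ).2
  have hsM : star M * M = 1 := huni.1
  have hadj : star M = M.adjugate := by
    have h2 : M * M.adjugate = 1 := by
      rw [Matrix.mul_adjugate, hdet, one_smul]
    calc star M = star M * (M * M.adjugate) := by rw [h2, mul_one]
      _ = (star M * M) * M.adjugate := by rw [mul_assoc]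
      _ = M.adjugate := by rw [hsM, one_mul]
  have e11 : M 1 1 = star (M 0 0) := by
    have := congrFun (congrFun hadj 0) 0
    simpa [Matrix.star_eq_conjTranspose, Matrix.conjTranspose_apply,
      Matrix.adjugate_fin_two] using this.symm
  have e10 : M 1 0 = -star (M 0 1) := by
    have := congrFun (congrFun hadj 0) 1
    simp [Matrix.star_eq_conjTranspose, Matrix.conjTranspose_apply,
      Matrix.adjugate_fin_two] at this
    have := congrArg star this
    simp at this
    simpa [Complex.star_def] using this
  refine ⟨M 0 0, M 0 1, ?_, ?_⟩
  · rw [Matrix.det_fin_two, e11, e10] at hdet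
    rw [← hdet]; ring
  · apply SU2.ext'
    rw [su2Mat_mkSU, ← hM]
    ext i j
    fin_cases i <;> fin_cases j <;> simp [mC, e10, e11]

/-- `-1` as an element of `SU2`. -/
def negOneSU : SU2 := mkSU (-1) 0 (by simp)

@[simp] lemma su2Mat_negOneSU : su2Mat negOneSU = -1 := by
  rw [negOneSU, su2Mat_mkSU, mC_negone]

lemma negOneSU_central (A : SU2) : negOneSU * A = A * negOneSU := by
  apply SU2.ext'
  simp

/-- `X₀ = diag(i, -i)` as an element of `SU2`. -/
def X0 : SU2 := mkSU Complex.I 0 (by simp [Complex.mul_conj'])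

/-- `Y₀ = [[0,1],[-1,0]]` as an element of `SU2`. -/
def Y0 : SU2 := mkSU 0 1 (by simp)

end
noncomputable section

lemma mC_congr {a b c d : ℂ} (h1 : a = c) (h2 : b = d) : mC a b = mC c d := by
  rw [h1, h2]

lemma traceless_of_anticomm {a b c d : ℂ} (hcd : c * star c + d * star d = 1)
    (hM : mC a b * mC c d = -(mC c d * mC a b)) : star a = -a := by
  have h1 : mC a b = -(mC c d * mC a b * star (mC c d)) := by
    calc mC a b = mC a b * (mC c d * star (mC c d)) := by
          rw [mC_mul_star_self hcd, mul_one]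
      _ = (mC a b * mC c d) * star (mC c d) := by rw [mul_assoc]
      _ = -(mC c d * mC a b) * star (mC c d) := by rw [hM]
      _ = -(mC c d * mC a b * star (mC c d)) := by rw [neg_mul]
  have h2 : (mC a b).trace = -((mC a b).trace) := by
    conv_lhs => rw [h1]
    rw [Matrix.trace_neg]
    congr 1
    rw [Matrix.trace_mul_comm, ← mul_assoc, mC_star_mul_self hcd, one_mul]
  rw [mC_trace] at h2
  linear_combination h2 / 2

/-- Step A: conjugate a traceless element of `SU(2)` to `diag(i, -i)`. -/
lemma stepA {a b : ℂ} (h : a * star a + b * star b = 1) (ht : star a = -a) :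
    ∃ p q : ℂ, (p * star p + q * star q = 1) ∧
      mC p q * mC a b * star (mC p q) = mC Complex.I 0 := by
  have ht' : (starRingEnd ℂ) a = -a := ht
  have hb2 : b * (starRingEnd ℂ) b = 1 + a * a := by
    have h' : a * (starRingEnd ℂ) a + b * (starRingEnd ℂ) b = 1 := h
    rw [ht'] at h'
    linear_combination h'
  by_cases hb : a = Complex.I
  · have hb0 : b = 0 := by
      rw [hb] at hb2
      simpa [Complex.I_mul_I] using hb2
    refine ⟨1, 0, by simp, ?_⟩
    rw [hb, hb0, mC_one]
    simp
  · have hd : a - Complex.I ≠ 0 := sub_ne_zero.mpr hb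
    set n2r : ℝ := Complex.normSq b + Complex.normSq (a - Complex.I) with hn2r
    have hpos : 0 < n2r := by
      have h1 : 0 < Complex.normSq (a - Complex.I) := Complex.normSq_pos.mpr hd
      have h0 : 0 ≤ Complex.normSq b := Complex.normSq_nonneg b
      linarith
    set n : ℂ := ((Real.sqrt n2r : ℝ) : ℂ) with hn
    have hstarn : (starRingEnd ℂ) n = n := by rw [hn]; exact Complex.conj_ofReal _
    have hnne : n ≠ 0 := by
      rw [hn]
      exact_mod_cast Real.sqrt_ne_zero'.mpr hpos
    have hn2 : n * n = b * (starRingEnd ℂ) b + (a - Complex.I) * (-a + Complex.I) := by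
      rw [hn, ← Complex.ofReal_mul, Real.mul_self_sqrt hpos.le, hn2r]
      push_cast
      rw [← Complex.mul_conj, ← Complex.mul_conj]
      rw [map_sub, ht', Complex.conj_I]
      ring
    have hI2 : (Complex.I)^2 = -1 := Complex.I_sq
    refine ⟨(starRingEnd ℂ) b / n, (a - Complex.I) / n, ?_, ?_⟩
    · simp only [Complex.star_def, map_div₀, map_sub, map_neg, Complex.conj_conj,
        Complex.conj_I, hstarn, ht']
      field_simp
      linear_combination -hn2
    · rw [mC_star, mC_mul, mC_mul]
      apply mC_congr
      · simp only [Complex.star_def, map_div₀, map_sub, map_neg, Complex.conj_conj,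
          Complex.conj_I, hstarn, ht']
        field_simp
        linear_combination (Complex.I - a) * hb2 - Complex.I * hn2 + (Complex.I - a) * hI2
      · simp only [Complex.star_def, map_div₀, map_sub, map_neg, Complex.conj_conj,
          Complex.conj_I, hstarn, ht']
        field_simp
        linear_combination (starRingEnd ℂ) b * hI2 + (starRingEnd ℂ) b * hb2


/-- Conjugating any anticommuting pair in `SU(2)` to the standard pair. -/
lemma conj_to_std (X Y : SU2)
    (hanti : su2Mat X * su2Mat Y = -(su2Mat Y * su2Mat X)) :
    ∃ U : SU2, U * X * U⁻¹ = X0 ∧ U * Y * U⁻¹ = Y0 := by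
  have hI2 : (Complex.I)^2 = -1 := Complex.I_sq
  obtain ⟨a, b, hab, rfl⟩ := SU2.exists_form X
  obtain ⟨c, d, hcd, rfl⟩ := SU2.exists_form Y
  rw [su2Mat_mkSU, su2Mat_mkSU] at hanti
  have hta : star a = -a := traceless_of_anticomm hcd hanti
  obtain ⟨p, q, hu, hconj⟩ := stepA hab hta
  have hanti2 : mC Complex.I 0 * (mC p q * mC c d * star (mC p q)) =
      -((mC p q * mC c d * star (mC p q)) * mC Complex.I 0) := by
    rw [← hconj]
    calc mC p q * mC a b * star (mC p q) * (mC p q * mC c d * star (mC p q))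
        = mC p q * (mC a b * (star (mC p q) * mC p q) * mC c d) * star (mC p q) := by
          noncomm_ring
      _ = mC p q * (mC a b * mC c d) * star (mC p q) := by
          rw [mC_star_mul_self hu, mul_one]
      _ = mC p q * (-(mC c d * mC a b)) * star (mC p q) := by rw [hanti]
      _ = -(mC p q * (mC c d * (star (mC p q) * mC p q) * mC a b) * star (mC p q)) := by
          rw [mC_star_mul_self hu, mul_one]
          noncomm_ring
      _ = -(mC p q * mC c d * star (mC p q) * (mC p q * mC a b * star (mC p q))) := by
          noncomm_ring
  obtain ⟨c2, d2, hN2⟩ : ∃ c2 d2 : ℂ, mC p q * mC c d * star (mC p q) = mC c2 d2 :=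
    ⟨_, _, by rw [mC_star, mC_mul, mC_mul]⟩
  have hdet2 : c2 * star c2 + d2 * star d2 = 1 := by
    have hh : (mC p q * mC c d * star (mC p q)).det = 1 := by
      rw [Matrix.det_mul, Matrix.det_mul, Matrix.star_eq_conjTranspose,
        Matrix.det_conjTranspose, mC_det, mC_det, hu, hcd]
      simp
    rw [hN2, mC_det] at hh
    exact hh
  have hc20 : c2 = 0 := by
    rw [hN2, mC_mul, mC_mul, mC_neg] at hanti2
    obtain ⟨h1, -⟩ := mC_inj hanti2
    simp only [star_zero, mul_zero, zero_mul, sub_zero] at h1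
    have h2 : Complex.I * c2 = 0 := by linear_combination h1 / 2
    rcases mul_eq_zero.mp h2 with h3 | h3
    · exact absurd h3 Complex.I_ne_zero
    · exact h3
  rw [hc20] at hdet2
  simp only [star_zero, mul_zero, zero_add, zero_mul] at hdet2
  -- hdet2 : d2 * star d2 = 1
  obtain ⟨s, hs⟩ := IsAlgClosed.exists_pow_nat_eq (star d2) (n := 2) (by norm_num)
  have hsu : s * star s = 1 := by
    have h4 : (s * star s)^2 = 1 := by
      calc (s * star s)^2 = s^2 * star (s^2) := by rw [star_pow]; ring
        _ = star d2 * star (star d2) := by rw [hs]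
        _ = star d2 * d2 := by rw [star_star]
        _ = 1 := by linear_combination hdet2
    have hns : s * star s = ((Complex.normSq s : ℝ) : ℂ) := by
      rw [Complex.star_def, Complex.mul_conj]
    rw [hns] at h4 ⊢
    have h5 : (Complex.normSq s)^2 = 1 := by exact_mod_cast h4
    have h6 : Complex.normSq s = 1 := by nlinarith [Complex.normSq_nonneg s]
    rw [h6]
    norm_num
  have hUnit : (s*p) * star (s*p) + (s*q) * star (s*q) = 1 := by
    rw [star_mul', star_mul']
    calc s * p * (star s * star p) + s * q * (star s * star q)
        = (s * star s) * (p * star p + q * star q) := by ring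
      _ = 1 := by rw [hsu, hu, mul_one]
  refine ⟨mkSU (s*p) (s*q) hUnit, ?_, ?_⟩
  · apply SU2.ext'
    show su2Mat _ * su2Mat _ * star (su2Mat _) = su2Mat X0
    rw [su2Mat_mkSU, su2Mat_mkSU]
    have hfac : mC (s*p) (s*q) = mC s 0 * mC p q := by
      rw [mC_mul]; apply mC_congr <;> ring
    rw [hfac, StarMul.star_mul]
    calc mC s 0 * mC p q * mC a b * (star (mC p q) * star (mC s 0))
        = mC s 0 * (mC p q * mC a b * star (mC p q)) * star (mC s 0) := by noncomm_ring
      _ = mC s 0 * mC Complex.I 0 * star (mC s 0) := by rw [hconj]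
      _ = su2Mat X0 := by
          rw [mC_star, mC_mul, mC_mul]
          show _ = mC Complex.I 0
          apply mC_congr
          · simp only [star_zero, neg_zero, mul_zero, sub_zero, zero_mul]
            linear_combination Complex.I * hsu
          · simp
  · apply SU2.ext'
    show su2Mat _ * su2Mat _ * star (su2Mat _) = su2Mat Y0
    rw [su2Mat_mkSU, su2Mat_mkSU]
    have hfac : mC (s*p) (s*q) = mC s 0 * mC p q := by
      rw [mC_mul]; apply mC_congr <;> ring
    rw [hfac, StarMul.star_mul]
    calc mC s 0 * mC p q * mC c d * (star (mC p q) * star (mC s 0))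
        = mC s 0 * (mC p q * mC c d * star (mC p q)) * star (mC s 0) := by noncomm_ring
      _ = mC s 0 * mC 0 d2 * star (mC s 0) := by rw [hN2, hc20]
      _ = su2Mat Y0 := by
          rw [mC_star, mC_mul, mC_mul]
          show _ = mC 0 1
          apply mC_congr
          · simp
          · simp only [star_zero, neg_zero, mul_zero, zero_mul, star_star, zero_add, add_zero, sub_zero]
            calc s * d2 * s = s^2 * d2 := by ring
              _ = star d2 * d2 := by rw [hs]
              _ = 1 := by linear_combination hdet2

lemma centralizer_std (C : SU2) (hX : C * X0 = X0 * C) (hY : C * Y0 = Y0 * C) :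
    C = 1 ∨ C = negOneSU := by
  obtain ⟨u, v, huv, rfl⟩ := SU2.exists_form C
  have hX' : mC u v * mC Complex.I 0 = mC Complex.I 0 * mC u v := by
    have := congrArg su2Mat hX
    simpa [X0] using this
  have hY' : mC u v * mC 0 1 = mC 0 1 * mC u v := by
    have := congrArg su2Mat hY
    simpa [Y0] using this
  rw [mC_mul, mC_mul] at hX' hY'
  obtain ⟨-, h2⟩ := mC_inj hX'
  obtain ⟨-, h4⟩ := mC_inj hY'
  simp only [star_zero, mul_zero, zero_mul, sub_zero, add_zero, zero_add, mul_one, one_mul] at h2 h4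
  -- h2 : v * star I = I * v , h4 : u = star u (roughly)
  have hv : v = 0 := by
    rw [Complex.star_def, Complex.conj_I] at h2
    have h5 : Complex.I * v = 0 := by linear_combination -h2 / 2
    rcases mul_eq_zero.mp h5 with h6 | h6
    · exact absurd h6 Complex.I_ne_zero
    · exact h6
  have hu : u = star u := by simpa using h4
  have hu2 : u * u = 1 := by rw [← hu] at huv; rw [hv] at huv; simpa using huv
  have : (u - 1) * (u + 1) = 0 := by linear_combination hu2
  rcases mul_eq_zero.mp this with h | h
  · left
    apply SU2.ext'
    rw [su2Mat_mkSU, su2Mat_one, ← mC_one]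
    apply mC_congr
    · linear_combination h
    · rw [hv]
  · right
    apply SU2.ext'
    rw [su2Mat_mkSU, su2Mat_negOneSU, ← mC_negone]
    apply mC_congr
    · linear_combination h
    · rw [hv]

lemma comm_eval (ρ : GammaGroup →* SU2) :
    ρ gammaCommutator = ρ (1, FreeGroup.of 0) * ρ (1, FreeGroup.of 1) *
      (ρ (1, FreeGroup.of 0))⁻¹ * (ρ (1, FreeGroup.of 1))⁻¹ := by
  rw [← _root_.map_inv ρ, ← _root_.map_inv ρ, ← _root_.map_mul, ← _root_.map_mul, ← _root_.map_mul]
  congr 1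

lemma anti_of_sends (ρ : GammaGroup →* SU2) (h : SendsCommutatorToNegOne ρ) :
    su2Mat (ρ (1, FreeGroup.of 0)) * su2Mat (ρ (1, FreeGroup.of 1)) =
      -(su2Mat (ρ (1, FreeGroup.of 1)) * su2Mat (ρ (1, FreeGroup.of 0))) := by
  set A := ρ (1, FreeGroup.of 0)
  set B := ρ (1, FreeGroup.of 1)
  have h1 : su2Mat (A * B * A⁻¹ * B⁻¹) = -1 := by
    rw [← comm_eval]; exact h
  have h2 : A * B = (A * B * A⁻¹ * B⁻¹) * (B * A) := by group
  calc su2Mat A * su2Mat B = su2Mat (A * B) := (su2Mat_mul A B).symm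
    _ = su2Mat (A * B * A⁻¹ * B⁻¹) * su2Mat (B * A) := by rw [← su2Mat_mul, ← h2]
    _ = -(su2Mat B * su2Mat A) := by rw [h1, su2Mat_mul, neg_one_mul]

lemma centralizer_pm (ρ : GammaGroup →* SU2) (h : SendsCommutatorToNegOne ρ)
    (C : SU2) (hC : ∀ g : GammaGroup, C * ρ g = ρ g * C) : C = 1 ∨ C = negOneSU := by
  obtain ⟨U, hU1, hU2⟩ := conj_to_std _ _ (anti_of_sends ρ h)
  set A := ρ (1, FreeGroup.of 0)
  set B := ρ (1, FreeGroup.of 1)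
  have hX : (U*C*U⁻¹) * X0 = X0 * (U*C*U⁻¹) := by
    rw [← hU1]
    have e1 : (U*C*U⁻¹)*(U*A*U⁻¹) = U*(C*A)*U⁻¹ := by group
    have e2 : (U*A*U⁻¹)*(U*C*U⁻¹) = U*(A*C)*U⁻¹ := by group
    rw [e1, e2, hC _]
  have hYc : (U*C*U⁻¹) * Y0 = Y0 * (U*C*U⁻¹) := by
    rw [← hU2]
    have e1 : (U*C*U⁻¹)*(U*B*U⁻¹) = U*(C*B)*U⁻¹ := by group
    have e2 : (U*B*U⁻¹)*(U*C*U⁻¹) = U*(B*C)*U⁻¹ := by group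
    rw [e1, e2, hC _]
  rcases centralizer_std _ hX hYc with h1 | h1
  · left
    have : C = U⁻¹ * (U*C*U⁻¹) * U := by group
    rw [this, h1]
    group
  · right
    have : C = U⁻¹ * (U*C*U⁻¹) * U := by group
    rw [this, h1, ← negOneSU_central, mul_assoc]
    simp

lemma std_comm_eval : su2Mat (X0 * Y0 * X0⁻¹ * Y0⁻¹) = -1 := by
  rw [su2Mat_mul, su2Mat_mul, su2Mat_mul, su2Mat_inv, su2Mat_inv]
  show mC Complex.I 0 * mC 0 1 * star (mC Complex.I 0) * star (mC 0 1) = -1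
  rw [mC_star, mC_star, mC_mul, mC_mul, mC_mul, ← mC_negone]
  apply mC_congr
  · simp
  · simp

lemma exists_rep (ε : SU2) (hcent : ∀ A : SU2, ε * A = A * ε) :
    ∃ ρ : GammaGroup →* SU2, SendsCommutatorToNegOne ρ ∧ ρ gammaZGen = ε := by
  have hcomm : ∀ (m : Multiplicative ℤ) (w : FreeGroup (Fin 2)),
      Commute ((zpowersHom SU2 ε) m) ((FreeGroup.lift ![X0, Y0]) w) := by
    intro m w
    have h0 : Commute ε ((FreeGroup.lift ![X0, Y0]) w) := hcent _
    simpa [zpowersHom_apply] using h0.zpow_left (Multiplicative.toAdd m)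
  refine ⟨(zpowersHom SU2 ε).noncommCoprod (FreeGroup.lift ![X0, Y0]) hcomm, ?_, ?_⟩
  · unfold SendsCommutatorToNegOne
    rw [gammaCommutator, MonoidHom.noncommCoprod_apply]
    simp only [zpowersHom_apply]
    rw [show (Multiplicative.toAdd (1 : Multiplicative ℤ)) = 0 from rfl, zpow_zero, one_mul]
    rw [_root_.map_mul, _root_.map_mul, _root_.map_inv, _root_.map_inv]
    simp only [_root_.map_mul, FreeGroup.lift_apply_of, Matrix.cons_val_zero, Matrix.cons_val_one, Matrix.head_cons]
    exact std_comm_eval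
  · rw [gammaZGen, MonoidHom.noncommCoprod_apply]
    simp only [zpowersHom_apply, _root_.map_one, mul_one, toAdd_ofAdd, zpow_one]

lemma zgen_central (g : GammaGroup) : gammaZGen * g = g * gammaZGen := by
  obtain ⟨z, w⟩ := g
  rw [gammaZGen]
  exact Prod.ext (mul_comm _ _) (by simp)

lemma zgen_pm (ρ : GammaGroup →* SU2) (h : SendsCommutatorToNegOne ρ) :
    ρ gammaZGen = 1 ∨ ρ gammaZGen = negOneSU := by
  apply centralizer_pm ρ h
  intro g
  rw [← _root_.map_mul, ← _root_.map_mul, zgen_central]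

lemma gamma_hom_ext {f g : GammaGroup →* SU2} (h1 : f gammaZGen = g gammaZGen)
    (hx : f (1, FreeGroup.of 0) = g (1, FreeGroup.of 0))
    (hy : f (1, FreeGroup.of 1) = g (1, FreeGroup.of 1)) : f = g := by
  have hfg : f.comp (MonoidHom.inr (Multiplicative ℤ) (FreeGroup (Fin 2))) =
      g.comp (MonoidHom.inr (Multiplicative ℤ) (FreeGroup (Fin 2))) := by
    apply FreeGroup.ext_hom
    intro i
    fin_cases i
    · exact hx
    · exact hy
  apply MonoidHom.ext
  rintro ⟨z, w⟩
  have hsplit : ((z, w) : GammaGroup) = gammaZGen ^ (Multiplicative.toAdd z) * ((1 : Multiplicative ℤ), w) := by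
    apply Prod.ext
    · show z = (Multiplicative.ofAdd (1:ℤ)) ^ (Multiplicative.toAdd z) * 1
      rw [mul_one]
      have h2 : Multiplicative.toAdd ((Multiplicative.ofAdd (1:ℤ)) ^ (Multiplicative.toAdd z))
          = Multiplicative.toAdd z := by
        simp [toAdd_zpow]
      exact (Multiplicative.toAdd.injective h2).symm
    · show w = 1 ^ (Multiplicative.toAdd z) * w
      rw [_root_.one_zpow, one_mul]
  rw [hsplit, _root_.map_mul, _root_.map_mul, map_zpow, map_zpow, h1]
  congr 1
  exact congrArg (fun h => h w) hfg

theorem su2_representations_of_torus_complement' :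
    (∃ ρ : GammaGroup →* SU2, SendsCommutatorToNegOne ρ) ∧
    (∀ ρ : GammaGroup →* SU2, SendsCommutatorToNegOne ρ →
      ∀ C : SU2, (∀ g : GammaGroup, C * ρ g = ρ g * C) →
        su2Mat C = 1 ∨ su2Mat C = -1) ∧
    (∀ ρ : GammaGroup →* SU2, SendsCommutatorToNegOne ρ →
      su2Mat (ρ gammaZGen) = 1 ∨ su2Mat (ρ gammaZGen) = -1) ∧
    (∃ ρ : GammaGroup →* SU2, SendsCommutatorToNegOne ρ ∧ su2Mat (ρ gammaZGen) = 1) ∧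
    (∃ ρ : GammaGroup →* SU2, SendsCommutatorToNegOne ρ ∧ su2Mat (ρ gammaZGen) = -1) ∧
    (∀ ρ ρ' : GammaGroup →* SU2, SendsCommutatorToNegOne ρ → SendsCommutatorToNegOne ρ' →
      ((∃ U : SU2, ∀ g : GammaGroup, ρ' g = U * ρ g * U⁻¹) ↔
        ρ gammaZGen = ρ' gammaZGen)) := by
  have hex1 : ∃ ρ : GammaGroup →* SU2, SendsCommutatorToNegOne ρ ∧ ρ gammaZGen = 1 :=
    exists_rep 1 (fun A => by rw [one_mul, mul_one])
  have hexN : ∃ ρ : GammaGroup →* SU2, SendsCommutatorToNegOne ρ ∧ ρ gammaZGen = negOneSU :=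
    exists_rep negOneSU negOneSU_central
  refine ⟨?_, ?_, ?_, ?_, ?_, ?_⟩
  · obtain ⟨ρ, h, -⟩ := hex1; exact ⟨ρ, h⟩
  · intro ρ h C hC
    rcases centralizer_pm ρ h C hC with h1 | h1 <;> rw [h1] <;> simp
  · intro ρ h
    rcases zgen_pm ρ h with h1 | h1 <;> rw [h1] <;> simp
  · obtain ⟨ρ, h, he⟩ := hex1; exact ⟨ρ, h, by rw [he]; simp⟩
  · obtain ⟨ρ, h, he⟩ := hexN; exact ⟨ρ, h, by rw [he]; simp⟩
  · intro ρ ρ' h h'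
    constructor
    · rintro ⟨U, hU⟩
      rw [hU gammaZGen]
      rcases zgen_pm ρ h with h1 | h1 <;> rw [h1]
      · simp
      · rw [← negOneSU_central, mul_assoc]; simp
    · intro hZ
      obtain ⟨U, hU1, hU2⟩ := conj_to_std _ _ (anti_of_sends ρ h)
      obtain ⟨U', hU1', hU2'⟩ := conj_to_std _ _ (anti_of_sends ρ' h')
      set V : SU2 := U'⁻¹ * U with hV
      set ρ'' : GammaGroup →* SU2 := (MulAut.conj V).toMonoidHom.comp ρ with hρ''def
      have hρ'' : ∀ g : GammaGroup, ρ'' g = V * ρ g * V⁻¹ := by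
        intro g
        simp [hρ''def, MulAut.conj_apply]
      have heq : ρ' = ρ'' := by
        apply gamma_hom_ext
        · rw [hρ'' gammaZGen, ← hZ]
          rcases zgen_pm ρ h with h1 | h1 <;> rw [h1]
          · simp
          · rw [← negOneSU_central, mul_assoc]; simp
        · rw [hρ'' _]
          have e1 : ρ' (1, FreeGroup.of 0) = U'⁻¹ * X0 * U' := by
            rw [← hU1']; group
          rw [e1, ← hU1, hV]
          group
        · rw [hρ'' _]
          have e1 : ρ' (1, FreeGroup.of 1) = U'⁻¹ * Y0 * U' := by
            rw [← hU2']; group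
          rw [e1, ← hU2, hV]
          group
      exact ⟨V, fun g => by rw [heq]; exact hρ'' g⟩

/-- **Representation count behind `I(𝕋³)`.**  Homomorphisms `ρ : ℤ × F₂ → SU(2)` with
`ρ(0, xyx⁻¹y⁻¹) = −I` exist; only `±I` commute with every element of the image of such a
`ρ`; each such `ρ` satisfies `ρ(1, e) = ±I`; both signs occur; and two such homomorphisms
are conjugate iff they agree on `(1, e)` — so there are exactly two conjugacy classes,
distinguished by `ρ(1, e) = I` or `ρ(1, e) = −I`. -/
theorem su2_representations_of_torus_complement :
    (∃ ρ : GammaGroup →* SU2, SendsCommutatorToNegOne ρ) ∧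
    (∀ ρ : GammaGroup →* SU2, SendsCommutatorToNegOne ρ →
      ∀ C : SU2, (∀ g : GammaGroup, C * ρ g = ρ g * C) →
        su2Mat C = 1 ∨ su2Mat C = -1) ∧
    (∀ ρ : GammaGroup →* SU2, SendsCommutatorToNegOne ρ →
      su2Mat (ρ gammaZGen) = 1 ∨ su2Mat (ρ gammaZGen) = -1) ∧
    (∃ ρ : GammaGroup →* SU2, SendsCommutatorToNegOne ρ ∧ su2Mat (ρ gammaZGen) = 1) ∧
    (∃ ρ : GammaGroup →* SU2, SendsCommutatorToNegOne ρ ∧ su2Mat (ρ gammaZGen) = -1) ∧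
    (∀ ρ ρ' : GammaGroup →* SU2, SendsCommutatorToNegOne ρ → SendsCommutatorToNegOne ρ' →
      ((∃ U : SU2, ∀ g : GammaGroup, ρ' g = U * ρ g * U⁻¹) ↔
        ρ gammaZGen = ρ' gammaZGen)) :=
  su2_representations_of_torus_complement'
end
end
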